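/- arXiv:1310.7004 — 6 statements merged into one kernel-verified Lean document; each statement's English description precedes it below -/
import Mathlib

section
/- Let N and n be positive integers, let A be a finite set partitioned into n pairwise disjoint sets A_1, ..., A_n each of size at least N, and let each unordered pair of elements of A be coloured red or blue. Then either there exists a sequence of elements u_1 ∈ A_1, ..., u_n ∈ A_n such that every pair {u_i, u_{i+1}} (for i ∈ [n-1]) is red, or there exists an index i ∈ [n-1] and subsets B_i ⊆ A_i, B_{i+1} ⊆ A_{i+1} with |B_i| ≥ N/2 and |B_{i+1}| ≥ N/2 such that every pair with one element in B_i and one in B_{i+1} is blue. -/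
open Classical in
/-- Reachable sets: `stmtS A red i` is the set of endpoints in `A i` of red
transversal paths through `A 0, …, A i`. -/
noncomputable def stmtS {α : Type*} [DecidableEq α] (A : ℕ → Finset α)
    (red : α → α → Bool) : ℕ → Finset α
  | 0 => A 0
  | (i+1) => (A (i+1)).filter (fun v => ∃ w ∈ stmtS A red i, red w v = true)

open Classical in
/-- Backward path tracing. -/
noncomputable def stmtG {α : Type*} [DecidableEq α] (A : ℕ → Finset α)
    (red : α → α → Bool) (m : ℕ) (x0 : α) : ℕ → α
  | 0 => x0
  | (k+1) =>
    if h : ∃ w ∈ stmtS A red (m - (k+1)), red w (stmtG A red m x0 k) = true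
    then h.choose else stmtG A red m x0 k

lemma stmtS_subset {α : Type*} [DecidableEq α] (A : ℕ → Finset α)
    (red : α → α → Bool) (i : ℕ) : stmtS A red i ⊆ A i := by
  cases i with
  | zero => simp [stmtS]
  | succ i => simp only [stmtS]; exact Finset.filter_subset _ _

lemma stmtG_spec {α : Type*} [DecidableEq α] (A : ℕ → Finset α)
    (red : α → α → Bool) (m : ℕ) (x0 : α) (hx0 : x0 ∈ stmtS A red m) :
    ∀ k, k ≤ m → stmtG A red m x0 k ∈ stmtS A red (m - k) := by
  intro k
  induction k with
  | zero => intro _; simpa [stmtG] using hx0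
  | succ k ih =>
    intro hk
    have hk' : k ≤ m := Nat.le_of_succ_le hk
    have hmem := ih hk'
    have heq : m - k = (m - (k+1)) + 1 := by omega
    rw [heq] at hmem
    simp only [stmtS, Finset.mem_filter] at hmem
    have h : ∃ w ∈ stmtS A red (m - (k+1)), red w (stmtG A red m x0 k) = true :=
      hmem.2
    simp only [stmtG, dif_pos h]
    exact h.choose_spec.1

lemma stmtG_red {α : Type*} [DecidableEq α] (A : ℕ → Finset α)
    (red : α → α → Bool) (m : ℕ) (x0 : α) (hx0 : x0 ∈ stmtS A red m)
    (k : ℕ) (hk : k + 1 ≤ m) :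
    red (stmtG A red m x0 (k+1)) (stmtG A red m x0 k) = true := by
  have hmem := stmtG_spec A red m x0 hx0 k (Nat.le_of_succ_le hk)
  have heq : m - k = (m - (k+1)) + 1 := by omega
  rw [heq] at hmem
  simp only [stmtS, Finset.mem_filter] at hmem
  have h : ∃ w ∈ stmtS A red (m - (k+1)), red w (stmtG A red m x0 k) = true :=
    hmem.2
  simp only [stmtG, dif_pos h]
  exact h.choose_spec.2

/-- Lemma `l:longPath`: Given positive integers `N`, `n`, pairwise
disjoint finite sets `A 0, …, A (n-1)` each of size at least `N`, and a symmetric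
2-colouring (`red a b = true` meaning the pair `{a,b}` is red, `false` meaning blue),
either there is a transversal sequence `u i ∈ A i` with all consecutive pairs red,
or there is an index `i` and subsets `B_i ⊆ A i`, `B_{i+1} ⊆ A (i+1)` of size at
least `N/2` with all pairs between them blue. -/
theorem stmt_0 {α : Type*} [DecidableEq α] (N n : ℕ) (hN : 0 < N) (hn : 0 < n)
    (A : Fin n → Finset α)
    (hdisj : ∀ i j : Fin n, i ≠ j → Disjoint (A i) (A j))
    (hcard : ∀ i : Fin n, N ≤ (A i).card)
    (red : α → α → Bool) (hsym : ∀ a b, red a b = red b a) :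
    (∃ u : Fin n → α, (∀ i, u i ∈ A i) ∧
      ∀ i : ℕ, ∀ h : i + 1 < n,
        red (u ⟨i, Nat.lt_of_succ_lt h⟩) (u ⟨i + 1, h⟩) = true) ∨
    (∃ i : ℕ, ∃ h : i + 1 < n, ∃ B₁ B₂ : Finset α,
      B₁ ⊆ A ⟨i, Nat.lt_of_succ_lt h⟩ ∧ B₂ ⊆ A ⟨i + 1, h⟩ ∧
      N ≤ 2 * B₁.card ∧ N ≤ 2 * B₂.card ∧
      ∀ x ∈ B₁, ∀ y ∈ B₂, red x y = false) := by
  classical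
  set A' : ℕ → Finset α := fun i => if h : i < n then A ⟨i, h⟩ else ∅ with hA'
  set S : ℕ → Finset α := stmtS A' red with hS
  have hA'eq : ∀ i (h : i < n), A' i = A ⟨i, h⟩ := by
    intro i h; simp [hA', h]
  by_cases hbad : ∃ i, i + 1 < n ∧ N ≤ 2 * (S i).card ∧ 2 * (S (i+1)).card < N
  · -- blue case
    obtain ⟨i, hi, hSi, hSi1⟩ := hbad
    right
    refine ⟨i, hi, S i, A' (i+1) \ S (i+1), ?_, ?_, hSi, ?_, ?_⟩
    · rw [← hA'eq i (Nat.lt_of_succ_lt hi)]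
      exact stmtS_subset A' red i
    · rw [← hA'eq (i+1) hi]
      exact Finset.sdiff_subset
    · have hsub : S (i+1) ⊆ A' (i+1) := stmtS_subset A' red (i+1)
      have h1 : (A' (i+1) \ S (i+1)).card = (A' (i+1)).card - (S (i+1)).card :=
        Finset.card_sdiff_of_subset hsub
      have h2 : N ≤ (A' (i+1)).card := by
        rw [hA'eq (i+1) hi]; exact hcard _
      omega
    · intro x hx y hy
      obtain ⟨hyA, hyS⟩ := Finset.mem_sdiff.mp hy
      by_contra hcon
      have hred : red x y = true := by
        cases h : red x y with
        | false => exact absurd h hcon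
        | true => rfl
      apply hyS
      have : y ∈ stmtS A' red (i+1) := by
        simp only [stmtS, Finset.mem_filter]
        exact ⟨hyA, x, hx, hred⟩
      exact this
  · -- red case
    push_neg at hbad
    have hbase : N ≤ 2 * (S 0).card := by
      have : S 0 = A' 0 := by simp [hS, stmtS]
      rw [this, hA'eq 0 hn]
      have := hcard ⟨0, hn⟩
      omega
    have hall : ∀ i, i < n → N ≤ 2 * (S i).card := by
      intro i
      induction i with
      | zero => intro _; exact hbase
      | succ i ih =>
        intro hi
        have hi' : i < n := Nat.lt_of_succ_lt hi
        by_contra hcon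
        exact absurd (hbad i hi (ih hi')) (by omega)
    left
    set m := n - 1 with hm
    have hmn : m < n := by omega
    have hSm : (S m).Nonempty := by
      have := hall m hmn
      exact Finset.card_pos.mp (by omega)
    obtain ⟨x0, hx0⟩ := hSm
    set g := stmtG A' red m x0 with hg
    refine ⟨fun i => g (m - i.1), ?_, ?_⟩
    · intro i
      have hi : (i : ℕ) ≤ m := by omega
      have := stmtG_spec A' red m x0 hx0 (m - i) (by omega)
      have heq : m - (m - (i : ℕ)) = i := by omega
      rw [heq] at this
      have hsub : S (i : ℕ) ⊆ A' (i : ℕ) := stmtS_subset A' red i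
      have := hsub this
      rwa [hA'eq i i.2, Fin.eta] at this
    · intro i hi
      have h1 : m - i = (m - (i+1)) + 1 := by omega
      simp only
      rw [h1]
      exact stmtG_red A' red m x0 hx0 (m - (i+1)) (by omega)
end

section
/- Let k and ℓ be positive integers, set n = 2^k and m = 2^ℓ, and let π be a permutation of [m]. For every 2-colouring (red/blue) of the unordered pairs of {1, ..., 2^{k(ℓ+1)}}, either there exists a set of n vertices all of whose pairs are blue, or there exist vertices p_1 < p_2 < ... < p_m (in the natural order) such that the pairs {p_{π(i)}, p_{π(i+1)}} are red for all i ∈ [m-1]. -/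
private def chainU (c : ℕ → ℕ → Bool) (B : ℕ → Finset ℕ) (s : ℕ → ℕ) (m : ℕ) :
    ℕ → Finset ℕ
  | 0 => B (s (m - 1))
  | j + 1 => (B (s (m - 2 - j))).filter (fun v => ∃ w ∈ chainU c B s m j, c v w = false)

open Classical in
private noncomputable def chainQ (c : ℕ → ℕ → Bool) (U : ℕ → Finset ℕ) (m : ℕ) : ℕ → ℕ
  | 0 => if h : (U (m - 1)).Nonempty then h.choose else 0
  | t + 1 =>
      if h : ∃ w ∈ U (m - 2 - t), c (chainQ c U m t) w = false then h.choose else 0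

private lemma chainU_subset (c : ℕ → ℕ → Bool) (B : ℕ → Finset ℕ) (s : ℕ → ℕ) (m : ℕ) :
    ∀ j, chainU c B s m j ⊆ B (s (m - 1 - j)) := by
  intro j
  cases j with
  | zero => simp [chainU]
  | succ j =>
      have h : m - 1 - (j + 1) = m - 2 - j := by omega
      rw [h, chainU]
      exact Finset.filter_subset _ _

private lemma chainU_not_mem (c : ℕ → ℕ → Bool) (B : ℕ → Finset ℕ) (s : ℕ → ℕ) (m : ℕ)
    (j v : ℕ) (hvB : v ∈ B (s (m - 2 - j))) (hv : v ∉ chainU c B s m (j + 1)) :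
    ∀ w ∈ chainU c B s m j, c v w = true := by
  intro w hw
  rw [chainU, Finset.mem_filter] at hv
  push_neg at hv
  have h := hv hvB w hw
  cases hcb : c v w
  · exact absurd hcb h
  · rfl

private lemma chainQ_mem (c : ℕ → ℕ → Bool) (B : ℕ → Finset ℕ) (s : ℕ → ℕ) (m : ℕ)
    (hne : ∀ j, j ≤ m - 1 → (chainU c B s m j).Nonempty) :
    ∀ t, t ≤ m - 1 → chainQ c (chainU c B s m) m t ∈ chainU c B s m (m - 1 - t) := by
  intro t
  induction t with
  | zero =>
      intro _
      rw [Nat.sub_zero, chainQ, dif_pos (hne (m - 1) le_rfl)]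
      exact (hne (m - 1) le_rfl).choose_spec
  | succ t IH =>
      intro ht
      have htm : t ≤ m - 1 := by omega
      have hmem := IH htm
      have hidx : m - 1 - t = (m - 2 - t) + 1 := by omega
      rw [hidx, chainU, Finset.mem_filter] at hmem
      have hex := hmem.2
      rw [chainQ, dif_pos hex]
      have : m - 1 - (t + 1) = m - 2 - t := by omega
      rw [this]
      exact hex.choose_spec.1

private lemma chainQ_red (c : ℕ → ℕ → Bool) (B : ℕ → Finset ℕ) (s : ℕ → ℕ) (m : ℕ)
    (hne : ∀ j, j ≤ m - 1 → (chainU c B s m j).Nonempty) :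
    ∀ t, t + 1 ≤ m - 1 →
      c (chainQ c (chainU c B s m) m t) (chainQ c (chainU c B s m) m (t + 1)) = false := by
  intro t ht
  have htm : t ≤ m - 1 := by omega
  have hmem := chainQ_mem c B s m hne t htm
  have hidx : m - 1 - t = (m - 2 - t) + 1 := by omega
  rw [hidx, chainU, Finset.mem_filter] at hmem
  have hex := hmem.2
  rw [chainQ, dif_pos hex]
  exact hex.choose_spec.2

private lemma exists_mono (V : Finset ℕ) (r : ℕ) (h : r ≤ V.card) :
    ∃ p : Fin r → ℕ, (∀ t, p t ∈ V) ∧ StrictMono p := by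
  obtain ⟨V', hsub, hcard⟩ := Finset.exists_subset_card_eq h
  exact ⟨fun t => (V'.orderIsoOfFin hcard t : ℕ),
    fun t => hsub (V'.orderIsoOfFin hcard t).2,
    fun a b hab => Subtype.coe_lt_coe.mpr ((V'.orderIsoOfFin hcard).lt_iff_lt.mpr hab)⟩

private lemma exists_blocks (V : Finset ℕ) (m b : ℕ) (h : m * b ≤ V.card) :
    ∃ B : ℕ → Finset ℕ,
      (∀ j, j < m → (B j).card = b) ∧
      (∀ j, j < m → B j ⊆ V) ∧
      (∀ j j', j < j' → j' < m → ∀ x ∈ B j, ∀ y ∈ B j', x < y) := by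
  obtain ⟨V', hV'sub, hV'card⟩ := Finset.exists_subset_card_eq h
  set N := m * b with hN
  let e := V'.orderIsoOfFin hV'card
  let g : ℕ → ℕ := fun i => if h : i < N then (e ⟨i, h⟩ : ℕ) else 0
  have hg : ∀ i j : ℕ, i < j → j < N → g i < g j := by
    intro i j hij hj
    have hi : i < N := lt_trans hij hj
    show (if h : i < N then (e ⟨i, h⟩ : ℕ) else 0) < (if h : j < N then (e ⟨j, h⟩ : ℕ) else 0)
    rw [dif_pos hi, dif_pos hj]
    exact Subtype.coe_lt_coe.mpr (e.lt_iff_lt.mpr (Fin.mk_lt_mk.mpr hij))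
  have hgV : ∀ i : ℕ, i < N → g i ∈ V := by
    intro i hi
    show (if h : i < N then (e ⟨i, h⟩ : ℕ) else 0) ∈ V
    rw [dif_pos hi]
    exact hV'sub (e ⟨i, hi⟩).2
  have hub : ∀ j, j < m → j * b + b ≤ N := by
    intro j hj
    have h1 : j + 1 ≤ m := hj
    calc j * b + b = (j + 1) * b := by ring
    _ ≤ m * b := Nat.mul_le_mul_right b h1
  refine ⟨fun j => (Finset.Ico (j * b) (j * b + b)).image g, ?_, ?_, ?_⟩
  · intro j hj
    rw [Finset.card_image_of_injOn, Nat.card_Ico]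
    · omega
    · intro x hx y hy hxy
      simp only [Finset.coe_Ico, Set.mem_Ico] at hx hy
      have hxN : x < N := lt_of_lt_of_le hx.2 (hub j hj)
      have hyN : y < N := lt_of_lt_of_le hy.2 (hub j hj)
      by_contra hne
      rcases Nat.lt_or_ge x y with h1 | h1
      · exact absurd hxy (Nat.ne_of_lt (hg x y h1 hyN))
      · have h2 : y < x := by omega
        exact absurd hxy.symm (Nat.ne_of_lt (hg y x h2 hxN))
  · intro j hj x hx
    rw [Finset.mem_image] at hx
    obtain ⟨i, hi, rfl⟩ := hx
    rw [Finset.mem_Ico] at hi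
    exact hgV i (lt_of_lt_of_le hi.2 (hub j hj))
  · intro j j' hjj' hj' x hx y hy
    rw [Finset.mem_image] at hx hy
    obtain ⟨i, hi, rfl⟩ := hx
    obtain ⟨i', hi', rfl⟩ := hy
    rw [Finset.mem_Ico] at hi hi'
    have h1 : i < i' := by
      have : j * b + b ≤ j' * b := by
        have : j + 1 ≤ j' := hjj'
        calc j * b + b = (j + 1) * b := by ring
        _ ≤ j' * b := Nat.mul_le_mul_right b this
      omega
    exact hg i i' h1 (lt_of_lt_of_le hi'.2 (hub j' hj'))

private theorem aux (ℓ : ℕ) (σ : Equiv.Perm (Fin (2 ^ ℓ))) :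
    ∀ k : ℕ, 1 ≤ k → ∀ c : ℕ → ℕ → Bool, (∀ a b, c a b = c b a) →
      ∀ V : Finset ℕ, 2 ^ (k * (ℓ + 1)) ≤ V.card →
      ((∃ S : Finset ℕ, S ⊆ V ∧ S.card = 2 ^ k ∧
          ∀ a ∈ S, ∀ b ∈ S, a ≠ b → c a b = true) ∨
       (∃ p : Fin (2 ^ ℓ) → ℕ, (∀ t, p t ∈ V) ∧ StrictMono p ∧
         ∀ i : ℕ, ∀ h : i + 1 < 2 ^ ℓ,
           c (p (σ ⟨i, Nat.lt_of_succ_lt h⟩)) (p (σ ⟨i + 1, h⟩)) = false)) := by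
  intro k hk
  induction k, hk using Nat.le_induction with
  | base =>
      intro c hsym V hV
      by_cases hblue : ∃ a ∈ V, ∃ b ∈ V, a ≠ b ∧ c a b = true
      · obtain ⟨a, ha, b, hb, hab, hcab⟩ := hblue
        left
        refine ⟨{a, b}, ?_, ?_, ?_⟩
        · intro x hx
          rcases Finset.mem_insert.mp hx with rfl | hx
          · exact ha
          · rw [Finset.mem_singleton] at hx; subst hx; exact hb
        · rw [Finset.card_insert_of_notMem (by simpa using hab), Finset.card_singleton]
          norm_num
        · intro x hx y hy hxy
          simp only [Finset.mem_insert, Finset.mem_singleton] at hx hy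
          rcases hx with rfl | rfl <;> rcases hy with rfl | rfl
          · exact absurd rfl hxy
          · exact hcab
          · rw [hsym]; exact hcab
          · exact absurd rfl hxy
      · right
        push_neg at hblue
        have hred : ∀ a ∈ V, ∀ b ∈ V, a ≠ b → c a b = false := by
          intro a ha b hb hab
          have := hblue a ha b hb hab
          cases hcb : c a b
          · rfl
          · exact absurd hcb this
        have hm : 2 ^ ℓ ≤ V.card := by
          refine le_trans ?_ hV
          exact Nat.pow_le_pow_right (by norm_num) (by omega)
        obtain ⟨p, hpV, hpmono⟩ := exists_mono V (2 ^ ℓ) hm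
        refine ⟨p, hpV, hpmono, ?_⟩
        intro i h
        have hne : (σ ⟨i, Nat.lt_of_succ_lt h⟩) ≠ (σ ⟨i + 1, h⟩) := by
          intro heq
          have := σ.injective heq
          simp only [Fin.mk.injEq] at this
          omega
        exact hred _ (hpV _) _ (hpV _) (fun hpe => hne (hpmono.injective hpe))
  | succ k hk IH =>
      intro c hsym V hV
      set θ := 2 ^ (k * (ℓ + 1)) with hθ
      have hθpos : 1 ≤ θ := Nat.one_le_two_pow
      have hmpos : 1 ≤ (2 ^ ℓ) := Nat.one_le_two_pow
      have hNeq : 2 ^ ((k + 1) * (ℓ + 1)) = (2 ^ ℓ) * (2 * θ) := by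
        have harith : (k + 1) * (ℓ + 1) = ℓ + (1 + k * (ℓ + 1)) := by ring
        rw [hθ, harith, pow_add, pow_add, pow_one]
      have hVN : (2 ^ ℓ) * (2 * θ) ≤ V.card := by rw [← hNeq]; exact hV
      obtain ⟨B, hBcard, hBV, hBsep⟩ := exists_blocks V (2 ^ ℓ) (2 * θ) hVN
      have hBdisj : ∀ i i', i < (2 ^ ℓ) → i' < (2 ^ ℓ) → i ≠ i' → Disjoint (B i) (B i') := by
        intro i i' hi hi' hne
        rw [Finset.disjoint_left]
        intro x hx hx'
        rcases Nat.lt_or_ge i i' with h1 | h1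
        · exact absurd rfl (Nat.ne_of_lt (hBsep i i' h1 hi' x hx x hx'))
        · have h2 : i' < i := by omega
          exact absurd rfl (Nat.ne_of_lt (hBsep i' i h2 hi x hx' x hx))
      set sn : ℕ → ℕ := fun t => if h : t < (2 ^ ℓ) then ((σ ⟨t, h⟩ : Fin (2 ^ ℓ)) : ℕ) else 0 with hsn
      have hsnlt : ∀ t, sn t < (2 ^ ℓ) := by
        intro t
        by_cases h : t < (2 ^ ℓ)
        · simp only [hsn, dif_pos h]
          exact (σ ⟨t, h⟩).isLt
        · simp only [hsn, dif_neg h]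
          omega
      set U := chainU c B sn (2 ^ ℓ) with hU
      have hUsub : ∀ j, U j ⊆ B (sn ((2 ^ ℓ) - 1 - j)) := chainU_subset c B sn (2 ^ ℓ)
      have hUV : ∀ j, U j ⊆ V := fun j =>
        le_trans (hUsub j) (hBV _ (hsnlt _))
      have hU0card : (U 0).card = 2 * θ := by
        rw [hU]
        show (B (sn ((2 ^ ℓ) - 1))).card = 2 * θ
        exact hBcard _ (hsnlt _)
      by_cases hgood : ∀ j, j ≤ (2 ^ ℓ) - 1 → θ ≤ (U j).card
      · -- success: build the red path
        right
        have hne : ∀ j, j ≤ (2 ^ ℓ) - 1 → (U j).Nonempty := by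
          intro j hj
          exact Finset.card_pos.mp (lt_of_lt_of_le hθpos (hgood j hj))
        set q := chainQ c U (2 ^ ℓ) with hq
        have hqmem : ∀ t, t ≤ (2 ^ ℓ) - 1 → q t ∈ U ((2 ^ ℓ) - 1 - t) := chainQ_mem c B sn (2 ^ ℓ) hne
        have hqred : ∀ t, t + 1 ≤ (2 ^ ℓ) - 1 → c (q t) (q (t + 1)) = false :=
          chainQ_red c B sn (2 ^ ℓ) hne
        have hqblock : ∀ t, t ≤ (2 ^ ℓ) - 1 → q t ∈ B (sn t) := by
          intro t ht
          have := hUsub ((2 ^ ℓ) - 1 - t) (hqmem t ht)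
          have hidx : (2 ^ ℓ) - 1 - ((2 ^ ℓ) - 1 - t) = t := by omega
          rwa [hidx] at this
        set p : Fin (2 ^ ℓ) → ℕ := fun v => q ((σ.symm v : Fin (2 ^ ℓ)) : ℕ) with hp
        have hpblock : ∀ v : Fin (2 ^ ℓ), p v ∈ B ((v : Fin (2 ^ ℓ)) : ℕ) := by
          intro v
          have h1 : ((σ.symm v : Fin (2 ^ ℓ)) : ℕ) ≤ (2 ^ ℓ) - 1 := by
            have := (σ.symm v).isLt
            omega
          have h2 := hqblock _ h1
          have h3 : sn ((σ.symm v : Fin (2 ^ ℓ)) : ℕ) = (v : ℕ) := by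
            simp only [hsn, dif_pos (σ.symm v).isLt, Fin.eta, Equiv.apply_symm_apply]
          rwa [h3] at h2
        refine ⟨p, ?_, ?_, ?_⟩
        · intro v
          exact hBV _ v.isLt (hpblock v)
        · intro v v' hvv'
          exact hBsep _ _ hvv' v'.isLt _ (hpblock v) _ (hpblock v')
        · intro i h
          have e1 : p (σ ⟨i, Nat.lt_of_succ_lt h⟩) = q i := by
            rw [hp]
            simp only [Equiv.symm_apply_apply]
          have e2 : p (σ ⟨i + 1, h⟩) = q (i + 1) := by
            rw [hp]
            simp only [Equiv.symm_apply_apply]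
          rw [e1, e2]
          exact hqred i (by omega)
      · -- failure: two large sets, all blue in between
        push_neg at hgood
        obtain ⟨j, hjm, hjcard⟩ := hgood
        have hexP : ∃ j, j ≤ 2 ^ ℓ - 1 ∧ (U j).card < θ := ⟨j, hjm, hjcard⟩
        have hfind := Nat.find_spec hexP
        have hfne : Nat.find hexP ≠ 0 := by
          intro h0
          rw [h0, hU0card] at hfind
          omega
        obtain ⟨j₀, hj₀⟩ : ∃ j₀, Nat.find hexP = j₀ + 1 := ⟨Nat.find hexP - 1, by omega⟩
        rw [hj₀] at hfind
        have hP1 : j₀ + 1 ≤ 2 ^ ℓ - 1 ∧ (U (j₀ + 1)).card < θ := hfind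
        have hP0 : θ ≤ (U j₀).card := by
          have hmin : ¬(j₀ ≤ 2 ^ ℓ - 1 ∧ (U j₀).card < θ) :=
            Nat.find_min hexP (by omega)
          push_neg at hmin
          exact hmin (by omega)
        set Y := U j₀ with hY
        set X := B (sn ((2 ^ ℓ) - 2 - j₀)) \ U (j₀ + 1) with hX
        have hUj₀1sub : U (j₀ + 1) ⊆ B (sn ((2 ^ ℓ) - 2 - j₀)) := by
          have := hUsub (j₀ + 1)
          have hidx : (2 ^ ℓ) - 1 - (j₀ + 1) = (2 ^ ℓ) - 2 - j₀ := by omega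
          rwa [hidx] at this
        have hXcard : θ ≤ X.card := by
          rw [hX, Finset.card_sdiff_of_subset hUj₀1sub, hBcard _ (hsnlt _)]
          omega
        have hcross : ∀ a ∈ X, ∀ w ∈ Y, c a w = true := by
          intro a ha w hw
          rw [hX, Finset.mem_sdiff] at ha
          exact chainU_not_mem c B sn (2 ^ ℓ) j₀ a ha.1 ha.2 w hw
        have hXV : X ⊆ V := le_trans (Finset.sdiff_subset) (hBV _ (hsnlt _))
        have hYV : Y ⊆ V := hUV j₀
        have hdisjXY : Disjoint X Y := by
          have h1 : X ⊆ B (sn ((2 ^ ℓ) - 2 - j₀)) := Finset.sdiff_subset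
          have h2 : Y ⊆ B (sn ((2 ^ ℓ) - 1 - j₀)) := hUsub j₀
          have hne : sn ((2 ^ ℓ) - 2 - j₀) ≠ sn ((2 ^ ℓ) - 1 - j₀) := by
            intro heq
            have ha : (2 ^ ℓ) - 2 - j₀ < (2 ^ ℓ) := by omega
            have hb : (2 ^ ℓ) - 1 - j₀ < (2 ^ ℓ) := by omega
            simp only [hsn, dif_pos ha, dif_pos hb] at heq
            have := σ.injective (Fin.val_injective heq)
            simp only [Fin.mk.injEq] at this
            omega
          exact Finset.disjoint_of_subset_left h1
            (Finset.disjoint_of_subset_right h2 (hBdisj _ _ (hsnlt _) (hsnlt _) hne))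
        rcases IH c hsym X hXcard with ⟨SX, hSXsub, hSXcard, hSXblue⟩ | ⟨p, hpX, hpm, hpr⟩
        · rcases IH c hsym Y hP0 with ⟨SY, hSYsub, hSYcard, hSYblue⟩ | ⟨p, hpY, hpm, hpr⟩
          · left
            refine ⟨SX ∪ SY, ?_, ?_, ?_⟩
            · intro x hx
              rcases Finset.mem_union.mp hx with hx | hx
              · exact hXV (hSXsub hx)
              · exact hYV (hSYsub hx)
            · rw [Finset.card_union_of_disjoint
                (Finset.disjoint_of_subset_left hSXsub
                  (Finset.disjoint_of_subset_right hSYsub hdisjXY)),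
                hSXcard, hSYcard, pow_succ]
              ring
            · intro a ha b hb hab
              rcases Finset.mem_union.mp ha with ha' | ha' <;>
                rcases Finset.mem_union.mp hb with hb' | hb'
              · exact hSXblue a ha' b hb' hab
              · exact hcross a (hSXsub ha') b (hSYsub hb')
              · rw [hsym]; exact hcross b (hSXsub hb') a (hSYsub ha')
              · exact hSYblue a ha' b hb' hab
          · exact Or.inr ⟨p, fun t => hYV (hpY t), hpm, hpr⟩
        · exact Or.inr ⟨p, fun t => hXV (hpX t), hpm, hpr⟩

/-- Theorem `t:OrderedRamsey`, core case: with `n = 2^k`, `m = 2^ℓ`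
and an ordered path on `m` vertices whose edge pattern is given by the permutation
`π`, every symmetric 2-colouring (blue = `true`, red = `false`) of the pairs of
`{1, …, 2^{k(ℓ+1)}}` contains a blue clique on `n` vertices or a red copy of the
ordered path: vertices `p 0 < p 1 < … < p (m-1)` with all pairs
`{p (π i), p (π (i+1))}` red. -/
theorem stmt_3 (k ℓ : ℕ) (hk : 1 ≤ k) (hℓ : 1 ≤ ℓ)
    (π : Equiv.Perm (Fin (2 ^ ℓ)))
    (c : Fin (2 ^ (k * (ℓ + 1))) → Fin (2 ^ (k * (ℓ + 1))) → Bool)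
    (hsym : ∀ a b, c a b = c b a) :
    (∃ S : Finset (Fin (2 ^ (k * (ℓ + 1)))), S.card = 2 ^ k ∧
      ∀ a ∈ S, ∀ b ∈ S, a ≠ b → c a b = true) ∨
    (∃ p : Fin (2 ^ ℓ) → Fin (2 ^ (k * (ℓ + 1))), StrictMono p ∧
      ∀ i : ℕ, ∀ h : i + 1 < 2 ^ ℓ,
        c (p (π ⟨i, Nat.lt_of_succ_lt h⟩)) (p (π ⟨i + 1, h⟩)) = false) := by
  have hNpos : 0 < (2 ^ (k * (ℓ + 1))) := by positivity
  set c' : ℕ → ℕ → Bool := fun a b =>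
    if ha : a < (2 ^ (k * (ℓ + 1))) then (if hb : b < (2 ^ (k * (ℓ + 1))) then c ⟨a, ha⟩ ⟨b, hb⟩ else true) else true with hc'
  have hsym' : ∀ a b, c' a b = c' b a := by
    intro a b
    by_cases ha : a < (2 ^ (k * (ℓ + 1))) <;> by_cases hb : b < (2 ^ (k * (ℓ + 1)))
    · simp only [hc', dif_pos ha, dif_pos hb]
      exact hsym _ _
    · simp only [hc', dif_pos ha, dif_neg hb]
    · simp only [hc', dif_neg ha, dif_pos hb]
    · simp only [hc', dif_neg ha, dif_neg hb]
  have hVcard : 2 ^ (k * (ℓ + 1)) ≤ (Finset.range (2 ^ (k * (ℓ + 1)))).card := by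
    rw [Finset.card_range]
  rcases aux ℓ π k hk c' hsym' (Finset.range (2 ^ (k * (ℓ + 1)))) hVcard with
    ⟨S, hSsub, hScard, hSblue⟩ | ⟨p, hpV, hpm, hpr⟩
  · left
    have hSlt : ∀ x ∈ S, x < (2 ^ (k * (ℓ + 1))) := fun x hx => Finset.mem_range.mp (hSsub hx)
    refine ⟨S.attachFin hSlt, ?_, ?_⟩
    · rw [Finset.card_attachFin]; exact hScard
    · intro a ha b hb hab
      rw [Finset.mem_attachFin] at ha hb
      have hab' : (a : ℕ) ≠ (b : ℕ) := fun h => hab (Fin.val_injective h)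
      have := hSblue _ ha _ hb hab'
      rw [hc'] at this
      simp only [dif_pos a.isLt, dif_pos b.isLt, Fin.eta] at this
      exact this
  · right
    have hplt : ∀ t, p t < (2 ^ (k * (ℓ + 1))) := fun t => Finset.mem_range.mp (hpV t)
    refine ⟨fun t => ⟨p t, hplt t⟩, ?_, ?_⟩
    · intro a b hab
      exact Fin.mk_lt_mk.mpr (hpm hab)
    · intro i h
      have := hpr i h
      rw [hc'] at this
      simp only [dif_pos (hplt _)] at this
      exact this
end

section
/- Let n ≥ 1 and let P be a set of 2n points in the plane in general position (no three collinear). Then the complete geometric graph on P contains a non-crossing copy of the ladder graph L_{2n}; that is, there is an injective assignment of the vertices of L_{2n} to P such that the straight-line segments corresponding to the edges of L_{2n} are pairwise non-crossing. -/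
/-- Points of the plane. -/
abbrev Pt : Type := ℝ × ℝ

noncomputable section

/-- Cross product (orientation test) of the triple `(p, q, r)`. -/
def crossProd (p q r : Pt) : ℝ :=
  (q.1 - p.1) * (r.2 - p.2) - (q.2 - p.2) * (r.1 - p.1)

/-- Two segments cross iff they meet in a point interior to both. -/
def SegCross (a b c d : Pt) : Prop :=
  (openSegment ℝ a b ∩ openSegment ℝ c d).Nonempty

/-- A finite point set is in general position if no three of its points are collinear. -/
def GenPos (P : Finset Pt) : Prop :=
  ∀ p ∈ P, ∀ q ∈ P, ∀ r ∈ P, p ≠ q → p ≠ r → q ≠ r →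
    ¬ Collinear ℝ ({p, q, r} : Set Pt)

/-- A finite point set is in convex position if no point lies in the convex hull
of the others. -/
def ConvexPos (P : Finset Pt) : Prop :=
  ∀ p ∈ P, p ∉ convexHull ℝ ((P.erase p : Finset Pt) : Set Pt)

/-- Two finite point sets are mutually avoiding: both have at least two points, no
line through two points of one meets the convex hull of the other. -/
def MutuallyAvoiding (A B : Finset Pt) : Prop :=
  2 ≤ A.card ∧ 2 ≤ B.card ∧
  (∀ a ∈ A, ∀ a' ∈ A, a ≠ a' →
    Disjoint ((affineSpan ℝ ({a, a'} : Set Pt) : AffineSubspace ℝ Pt) : Set Pt)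
      (convexHull ℝ (B : Set Pt))) ∧
  (∀ b ∈ B, ∀ b' ∈ B, b ≠ b' →
    Disjoint ((affineSpan ℝ ({b, b'} : Set Pt) : AffineSubspace ℝ Pt) : Set Pt)
      (convexHull ℝ (A : Set Pt)))

/-- The canonical order on the first set `A` of a mutually avoiding pair `(A, B)`:
`p` precedes `q` iff every point of `B` sees the (ordered) pair `(p, q)` clockwise. -/
def precA (B : Finset Pt) (p q : Pt) : Prop := ∀ b ∈ B, crossProd b p q < 0

/-- The canonical order on the second set `B` of a mutually avoiding pair `(A, B)`:
`p` precedes `q` iff every point of `A` sees the (ordered) pair `(p, q)`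
counterclockwise. -/
def precB (A : Finset Pt) (p q : Pt) : Prop := ∀ a ∈ A, 0 < crossProd a p q

/-- The edge segments (as ordered pairs of endpoints) of the straight-line drawing of
the ladder graph `L_{2n}` with rails `x 0 — x 1 — ⋯ — x (n-1)` and
`y 0 — ⋯ — y (n-1)` and rungs `x i — y i`. -/
def ladderEdges (n : ℕ) (x y : Fin n → Pt) : Set (Pt × Pt) :=
  {e | (∃ i j : Fin n, (i : ℕ) + 1 = (j : ℕ) ∧ e = (x i, x j)) ∨
       (∃ i j : Fin n, (i : ℕ) + 1 = (j : ℕ) ∧ e = (y i, y j)) ∨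
       (∃ i : Fin n, e = (x i, y i))}

/-- A family of segments is non-crossing if no two distinct ones cross. -/
def NoncrossingEdges (E : Set (Pt × Pt)) : Prop :=
  ∀ e ∈ E, ∀ f ∈ E, e ≠ f → ¬ SegCross e.1 e.2 f.1 f.2

/-- Two finite point sets can be (strictly) separated by a line. -/
def SeparatedByLine (A B : Finset Pt) : Prop :=
  ∃ a b c : ℝ, (a ≠ 0 ∨ b ≠ 0) ∧ (∀ p ∈ A, a * p.1 + b * p.2 < c) ∧
    (∀ q ∈ B, c < a * q.1 + b * q.2)

/-- The 2-coloured complete geometric graph on `C` (colouring `χ`, assumed symmetric)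
contains a monochromatic non-crossing copy of the ladder graph `L_{2n}`. -/
def MonoNoncrossingLadder (n : ℕ) (C : Finset Pt) (χ : Pt → Pt → Bool) : Prop :=
  ∃ (c : Bool) (x y : Fin n → Pt),
    (∀ i, x i ∈ C) ∧ (∀ i, y i ∈ C) ∧
    Function.Injective (Sum.elim x y) ∧
    (∀ e ∈ ladderEdges n x y, χ e.1 e.2 = c) ∧
    NoncrossingEdges (ladderEdges n x y)


namespace Stmt5Aux

lemma cross_swap23 (p q r : Pt) : crossProd p q r = - crossProd p r q := by
  unfold crossProd; ring

lemma cross_cyc (p q r : Pt) : crossProd p q r = crossProd q r p := by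
  unfold crossProd; ring

lemma cross_self2 (p q : Pt) : crossProd p q p = 0 := by unfold crossProd; ring

lemma cross_self3 (p q : Pt) : crossProd p q q = 0 := by unfold crossProd; ring

lemma cross_openSegment (A B u v z : Pt) (hz : z ∈ openSegment ℝ u v) :
    ∃ t : ℝ, 0 < t ∧ t < 1 ∧
      crossProd A B z = (1-t) * crossProd A B u + t * crossProd A B v := by
  obtain ⟨a, b, ha, hb, hab, h⟩ := hz
  refine ⟨b, hb, by linarith, ?_⟩
  have ha' : a = 1 - b := by linarith
  subst ha'
  have h1 : z.1 = (1-b) * u.1 + b * v.1 := by rw [← h]; simp [Prod.fst_add, Prod.smul_fst]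
  have h2 : z.2 = (1-b) * u.2 + b * v.2 := by rw [← h]; simp [Prod.snd_add, Prod.smul_snd]
  unfold crossProd
  rw [h1, h2]; ring

lemma noCross_of_sep (σ : ℝ) (A B u v w1 w2 : Pt)
    (hu : σ * crossProd A B u ≤ 0) (hv : σ * crossProd A B v ≤ 0)
    (hw1 : 0 ≤ σ * crossProd A B w1) (hw2 : 0 ≤ σ * crossProd A B w2)
    (hstrict : σ * crossProd A B u < 0 ∨
      (0 < σ * crossProd A B w1 ∧ 0 < σ * crossProd A B w2)) :
    ¬ SegCross u v w1 w2 := by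
  rintro ⟨z, hz1, hz2⟩
  obtain ⟨t, ht0, ht1, hte⟩ := cross_openSegment A B u v z hz1
  obtain ⟨s, hs0, hs1, hse⟩ := cross_openSegment A B w1 w2 z hz2
  have hte' : σ * crossProd A B z
      = (1-t) * (σ * crossProd A B u) + t * (σ * crossProd A B v) := by rw [hte]; ring
  have hse' : σ * crossProd A B z
      = (1-s) * (σ * crossProd A B w1) + s * (σ * crossProd A B w2) := by rw [hse]; ring
  rcases hstrict with h | ⟨h1, h2⟩
  · nlinarith
  · nlinarith

lemma noCross_shared (a b c : Pt) (h : crossProd a b c ≠ 0) :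
    ¬ (openSegment ℝ a b ∩ openSegment ℝ a c).Nonempty := by
  rintro ⟨w, hw1, hw2⟩
  obtain ⟨α, β, hα, hβ, hαβ, h1⟩ := hw1
  obtain ⟨α', β', hα', hβ', hαβ', h2⟩ := hw2
  apply h
  have hα2 : α = 1 - β := by linarith
  have hα2' : α' = 1 - β' := by linarith
  subst hα2 hα2'
  have f1 : (1-β) * a.1 + β * b.1 = w.1 := by
    have := congrArg Prod.fst h1; simpa [Prod.fst_add, Prod.smul_fst] using this
  have f2 : (1-β') * a.1 + β' * c.1 = w.1 := by
    have := congrArg Prod.fst h2; simpa [Prod.fst_add, Prod.smul_fst] using this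
  have g1 : (1-β) * a.2 + β * b.2 = w.2 := by
    have := congrArg Prod.snd h1; simpa [Prod.snd_add, Prod.smul_snd] using this
  have g2 : (1-β') * a.2 + β' * c.2 = w.2 := by
    have := congrArg Prod.snd h2; simpa [Prod.snd_add, Prod.smul_snd] using this
  have e1 : β * (b.1 - a.1) = β' * (c.1 - a.1) := by linear_combination f1 - f2
  have e2 : β * (b.2 - a.2) = β' * (c.2 - a.2) := by linear_combination g1 - g2
  have key : β' * (β * crossProd a b c) = 0 := by
    unfold crossProd
    linear_combination (β'*(c.2-a.2)) * e1 - (β'*(c.1-a.1)) * e2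
  simp [mul_eq_zero, hβ'.ne', hβ.ne'] at key
  exact key

lemma collinear_of_cross_zero (p q r : Pt) (h : crossProd p q r = 0) :
    Collinear ℝ ({p, q, r} : Set Pt) := by
  rcases eq_or_ne p q with rfl | hpq
  · have : ({p, p, r} : Set Pt) = {p, r} := by simp [Set.insert_comm]
    rw [this]; exact collinear_pair ℝ p r
  · rw [collinear_iff_of_mem (Set.mem_insert p {q, r})]
    refine ⟨q - p, ?_⟩
    rintro x (rfl | rfl | rfl)
    · exact ⟨0, by simp⟩
    · exact ⟨1, by simp⟩
    · unfold crossProd at h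
      rcases eq_or_ne (q.1 - p.1) 0 with h1 | h1
      · have h2 : q.2 - p.2 ≠ 0 := by
          intro h2; apply hpq; apply Prod.ext <;> [linarith; linarith]
        refine ⟨(x.2 - p.2) / (q.2 - p.2), ?_⟩
        have hx1 : x.1 - p.1 = 0 := by
          rcases mul_eq_zero.mp (by linear_combination -h + (x.2-p.2)*h1 :
              (q.2 - p.2) * (x.1 - p.1) = 0) with h' | h'
          · exact absurd h' h2
          · exact h'
        apply Prod.ext
        · simp [Prod.fst_add, Prod.smul_fst]; rw [h1]; simp; linarith
        · simp [Prod.snd_add, Prod.smul_snd]; field_simp; ring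
      · refine ⟨(x.1 - p.1) / (q.1 - p.1), ?_⟩
        apply Prod.ext
        · simp [Prod.fst_add, Prod.smul_fst]; field_simp; ring
        · simp [Prod.snd_add, Prod.smul_snd]
          field_simp
          nlinarith [h]

lemma exists_extreme(σ e1 e2 : ℝ) (hσ : σ * σ = 1) (b : Pt) (T : Finset Pt)
    (hne : T.Nonempty)
    (hhp : ∀ x ∈ T, 0 < e1 * (x.2 - b.2) - e2 * (x.1 - b.1))
    (hnd : ∀ x ∈ T, ∀ y ∈ T, x ≠ y → crossProd b x y ≠ 0) :
    ∃ c ∈ T, ∀ x ∈ T, x ≠ c → 0 < σ * crossProd b x c := by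
  induction T using Finset.cons_induction with
  | empty => exact absurd hne (by simp)
  | cons a' T ha' ih =>
    rcases T.eq_empty_or_nonempty with rfl | hTne
    · exact ⟨a', by simp, by simp⟩
    · have hmem : ∀ x ∈ T, x ∈ Finset.cons a' T ha' :=
        fun x hx => Finset.mem_cons.mpr (Or.inr hx)
      have hma' : a' ∈ Finset.cons a' T ha' := Finset.mem_cons.mpr (Or.inl rfl)
      obtain ⟨c', hc'T, hc'⟩ := ih hTne (fun x hx => hhp x (hmem x hx))
        (fun x hx y hy hxy => hnd x (hmem x hx) y (hmem y hy) hxy)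
      have ha'c' : a' ≠ c' := fun h => ha' (h ▸ hc'T)
      have hnd0 : crossProd b a' c' ≠ 0 := hnd a' hma' c' (hmem c' hc'T) ha'c'
      have hσ0 : σ ≠ 0 := by intro h; rw [h] at hσ; simp at hσ
      have hσnd : σ * crossProd b a' c' ≠ 0 := mul_ne_zero hσ0 hnd0
      rcases lt_or_gt_of_ne hσnd with hlt | hgt
      · refine ⟨a', hma', ?_⟩
        intro x hx hxa'
        have hxT : x ∈ T := by
          rcases Finset.mem_cons.mp hx with h | h
          · exact absurd h hxa'
          · exact h
        have hswap : σ * crossProd b c' a' = - (σ * crossProd b a' c') := by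
          rw [cross_swap23 b c' a']; ring
        have hac : 0 < σ * crossProd b c' a' := by rw [hswap]; linarith
        rcases eq_or_ne x c' with rfl | hxc'
        · exact hac
        · have hx' : 0 < σ * crossProd b x c' := hc' x hxT hxc'
          have hhx := hhp x (hmem x hxT)
          have hhc' := hhp c' (hmem c' hc'T)
          have hha' := hhp a' hma'
          have gpσ : (e1 * (c'.2 - b.2) - e2 * (c'.1 - b.1)) * (σ * crossProd b x a') =
              (e1 * (x.2 - b.2) - e2 * (x.1 - b.1)) * (σ * crossProd b c' a') +
              (e1 * (a'.2 - b.2) - e2 * (a'.1 - b.1)) * (σ * crossProd b x c') := by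
            unfold crossProd; ring
          nlinarith [gpσ, mul_pos hhx hac, mul_pos hha' hx', hhc']
      · refine ⟨c', hmem c' hc'T, ?_⟩
        intro x hx hxc'
        rcases Finset.mem_cons.mp hx with rfl | hxT
        · exact hgt
        · exact hc' x hxT hxc'

lemma build(m : ℕ) (S : Finset Pt)
    (hcr : ∀ p ∈ S, ∀ q ∈ S, ∀ r ∈ S, p ≠ q → p ≠ r → q ≠ r → crossProd p q r ≠ 0)
    (hS : S.card = m + 2) (a b : Pt) (ε : ℝ) (ha : a ∈ S) (hb : b ∈ S) (hab : a ≠ b)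
    (hε : ε * ε = 1)
    (hinv : ∀ x ∈ S, x ≠ a → x ≠ b → 0 < ε * crossProd a b x) :
    ∃ z : ℕ → Pt, z 0 = a ∧ z 1 = b ∧ (∀ k ≤ m + 1, z k ∈ S) ∧
      (∀ k l, k ≤ m + 1 → l ≤ m + 1 → k ≠ l → z k ≠ z l) ∧
      (∀ k j, k + 2 ≤ j → j ≤ m + 1 →
        0 < ε * (-1 : ℝ) ^ k * crossProd (z k) (z (k+1)) (z j)) ∧
      (∀ k, 1 ≤ k → k + 1 ≤ m + 1 →
        0 < ε * (-1 : ℝ) ^ (k+1) * crossProd (z k) (z (k+1)) (z (k-1))) := by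
  induction m generalizing S a b ε with
  | zero =>
    refine ⟨fun k => if k = 0 then a else b, by simp, by simp, ?_, ?_, ?_, ?_⟩
    · intro k hk
      by_cases h : k = 0 <;> simp [h, ha, hb]
    · intro k l hk hl hkl
      interval_cases k <;> interval_cases l <;> simp_all [hab, Ne.symm hab]
    · intro k j hkj hj; omega
    · intro k hk hk1; omega
  | succ m ih =>
    have hbma : b ∈ S.erase a := Finset.mem_erase.mpr ⟨Ne.symm hab, hb⟩
    set T : Finset Pt := (S.erase a).erase b with hT
    have hTcard : T.card = m + 1 := by
      rw [hT, Finset.card_erase_of_mem hbma, Finset.card_erase_of_mem ha, hS]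
      omega
    have hTne : T.Nonempty := Finset.card_pos.mp (by omega)
    have hTsub : ∀ x ∈ T, x ∈ S := fun x hx =>
      Finset.mem_of_mem_erase (Finset.mem_of_mem_erase hx)
    have hTa : ∀ x ∈ T, x ≠ a := fun x hx =>
      Finset.ne_of_mem_erase (Finset.mem_of_mem_erase hx)
    have hTb : ∀ x ∈ T, x ≠ b := fun x hx => Finset.ne_of_mem_erase hx
    obtain ⟨c, hcT, hc⟩ := exists_extreme ε (ε * (b.1 - a.1)) (ε * (b.2 - a.2)) hε b T hTne
      (by
        intro x hx
        have h0 := hinv x (hTsub x hx) (hTa x hx) (hTb x hx)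
        have he : ε * (b.1 - a.1) * (x.2 - b.2) - ε * (b.2 - a.2) * (x.1 - b.1)
            = ε * crossProd a b x := by unfold crossProd; ring
        rw [he]; exact h0)
      (fun x hx y hy hxy => hcr b hb x (hTsub x hx) y (hTsub y hy) (Ne.symm (hTb x hx))
          (Ne.symm (hTb y hy)) hxy)
    have hcS : c ∈ S := hTsub c hcT
    have hbc : b ≠ c := Ne.symm (hTb c hcT)
    have hca : c ≠ a := hTa c hcT
    have hSa : (S.erase a).card = m + 2 := by
      rw [Finset.card_erase_of_mem ha, hS]
      omega
    obtain ⟨z', hz'0, hz'1, hz'mem, hz'inj, hz'I, hz'II⟩ :=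
      ih (S.erase a)
        (fun p hp q hq r hr => hcr p (Finset.mem_of_mem_erase hp) q
          (Finset.mem_of_mem_erase hq) r (Finset.mem_of_mem_erase hr))
        hSa b c (-ε) hbma (Finset.mem_erase.mpr ⟨hca, hcS⟩) hbc
        (by nlinarith)
        (by
          intro x hx hxb hxc
          have hxT : x ∈ T := Finset.mem_erase.mpr ⟨hxb, hx⟩
          have h0 := hc x hxT hxc
          have he : (-ε) * crossProd b c x = ε * crossProd b x c := by
            rw [cross_swap23 b c x]; ring
          rw [he]; exact h0)
    refine ⟨fun k => if k = 0 then a else z' (k - 1), by simp, by simp [hz'0], ?_, ?_, ?_, ?_⟩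
    · -- membership
      intro k hk
      by_cases h : k = 0
      · simp [h, ha]
      · simp only [h, if_neg]
        exact Finset.mem_of_mem_erase (hz'mem (k-1) (by omega))
    · -- injectivity
      intro k l hk hl hkl
      by_cases h : k = 0
      · subst h
        simp only [if_pos rfl, if_neg hkl.symm]
        intro heq
        have : z' (l-1) ∈ S.erase a := hz'mem (l-1) (by omega)
        exact Finset.ne_of_mem_erase this heq.symm
      · by_cases h' : l = 0
        · subst h'
          simp only [if_pos rfl, if_neg h]
          intro heq
          have : z' (k-1) ∈ S.erase a := hz'mem (k-1) (by omega)
          exact Finset.ne_of_mem_erase this heq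
        · simp only [if_neg h, if_neg h']
          exact hz'inj (k-1) (l-1) (by omega) (by omega) (by omega)
    · -- invariant I
      intro k j hkj hj
      by_cases h : k = 0
      · subst h
        have hj1 : j - 1 ≥ 1 := by omega
        simp only [if_pos rfl, if_neg (by omega : ¬ j = 0), if_neg (by omega : ¬ (0:ℕ)+1 = 0)]
        have hzj : z' (j-1) ∈ S.erase a := hz'mem (j-1) (by omega)
        have h1 : z' (j-1) ≠ a := Finset.ne_of_mem_erase hzj
        have h2 : z' (j-1) ≠ b := by
          rw [← hz'0]; exact hz'inj (j-1) 0 (by omega) (by omega) (by omega)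
        have h0 := hinv (z' (j-1)) (Finset.mem_of_mem_erase hzj) h1 h2
        simpa [hz'0] using h0
      · obtain ⟨k', rfl⟩ : ∃ k', k = k' + 1 := ⟨k - 1, by omega⟩
        simp only [if_neg (by omega : ¬ k'+1 = 0), if_neg (by omega : ¬ k'+1+1 = 0),
          if_neg (by omega : ¬ j = 0)]
        have h0 := hz'I k' (j-1) (by omega) (by omega)
        have harith : (k'+1+1) - 1 = k' + 1 := by omega
        have harith2 : (k'+1) - 1 = k' := by omega
        rw [harith, harith2]
        have hjj : j - 1 = (j-1) := rfl
        have hsign : ε * (-1:ℝ)^(k'+1) = (-ε) * (-1:ℝ)^k' := by ring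
        rw [hsign]
        exact h0
    · -- invariant II
      intro k hk hk1
      by_cases h : k = 1
      · subst h
        simp only [if_neg (by omega : ¬ (1:ℕ) = 0), if_neg (by omega : ¬ (1:ℕ)+1 = 0),
          if_pos rfl]
        have e1 : (1:ℕ) - 1 = 0 := rfl
        have e2 : (1:ℕ) + 1 - 1 = 1 := rfl
        simp only [ite_true, if_true]
        rw [e1, e2, hz'0, hz'1]
        have h0 := hinv c hcS hca (Ne.symm hbc)
        have he : ε * (-1:ℝ)^(1+1) * crossProd b c a = ε * crossProd a b c := by
          rw [(cross_cyc a b c : crossProd a b c = crossProd b c a)]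
          ring
        rw [he]
        exact h0
      · obtain ⟨k', rfl⟩ : ∃ k', k = k' + 1 := ⟨k - 1, by omega⟩
        have hk'1 : 1 ≤ k' := by omega
        simp only [if_neg (by omega : ¬ k'+1 = 0), if_neg (by omega : ¬ k'+1+1 = 0),
          if_neg (by omega : ¬ k'+1-1 = 0)]
        have h0 := hz'II k' hk'1 (by omega)
        have e1 : k' + 1 + 1 - 1 = k' + 1 := by omega
        have e2 : k' + 1 - 1 = k' := by omega
        rw [e1, e2]
        have hsign : ε * (-1:ℝ)^(k'+1+1) = (-ε) * (-1:ℝ)^(k'+1) := by ring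
        rw [hsign]
        exact h0

lemma exists_gooddir(P : Finset Pt) :
    ∃ t : ℝ, ∀ p ∈ P, ∀ q ∈ P, p ≠ q → p.1 + t * p.2 ≠ q.1 + t * q.2 := by
  obtain ⟨t, ht⟩ := Infinite.exists_notMem_finset
    ((P ×ˢ P).image (fun pq => (pq.2.1 - pq.1.1) / (pq.1.2 - pq.2.2)))
  refine ⟨t, ?_⟩
  intro p hp q hq hpq heq
  rcases eq_or_ne p.2 q.2 with h2 | h2
  · apply hpq
    have h1 : p.1 = q.1 := by
      rw [h2] at heq; linarith
    exact Prod.ext h1 h2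
  · apply ht
    refine Finset.mem_image.mpr ⟨(p, q), Finset.mem_product.mpr ⟨hp, hq⟩, ?_⟩
    have hd : p.2 - q.2 ≠ 0 := sub_ne_zero.mpr h2
    field_simp
    linarith

lemma exists_start(P : Finset Pt) (h2 : 2 ≤ P.card)
    (hcr : ∀ p ∈ P, ∀ q ∈ P, ∀ r ∈ P, p ≠ q → p ≠ r → q ≠ r → crossProd p q r ≠ 0) :
    ∃ a ∈ P, ∃ b ∈ P, a ≠ b ∧ ∀ x ∈ P, x ≠ a → x ≠ b → 0 < crossProd a b x := by
  obtain ⟨t, ht⟩ := exists_gooddir P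
  have hPne : P.Nonempty := Finset.card_pos.mp (by omega)
  obtain ⟨a, haP, hamin⟩ := P.exists_min_image (fun p => p.1 + t * p.2) hPne
  have hane : (P.erase a).Nonempty := by
    rw [← Finset.card_pos, Finset.card_erase_of_mem haP]; omega
  obtain ⟨b, hbT, hb⟩ := exists_extreme (-1) t (-1) (by norm_num) a (P.erase a) hane
    (by
      intro x hx
      have hxP := Finset.mem_of_mem_erase hx
      have hxa := Finset.ne_of_mem_erase hx
      have hmin := hamin x hxP
      have hne := ht x hxP a haP hxa
      have : t * (x.2 - a.2) - (-1) * (x.1 - a.1) = (x.1 + t * x.2) - (a.1 + t * a.2) := by ring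
      rw [this]
      rcases lt_or_eq_of_le hmin with h | h
      · linarith
      · exact absurd h.symm hne)
    (fun x hx y hy hxy => hcr a haP x (Finset.mem_of_mem_erase hx) y (Finset.mem_of_mem_erase hy)
      (Ne.symm (Finset.ne_of_mem_erase hx)) (Ne.symm (Finset.ne_of_mem_erase hy)) hxy)
  refine ⟨a, haP, b, Finset.mem_of_mem_erase hbT, Ne.symm (Finset.ne_of_mem_erase hbT), ?_⟩
  intro x hxP hxa hxb
  have hx : x ∈ P.erase a := Finset.mem_erase.mpr ⟨hxa, hxP⟩
  have h0 := hb x hx hxb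
  have : crossProd a b x = (-1) * crossProd a x b := by rw [cross_swap23 a b x]; ring
  rw [this]
  exact h0

lemma pairs_noCross (M : ℕ) (z : ℕ → Pt)
    (hcrz : ∀ p q r, p ≤ M → q ≤ M → r ≤ M → p ≠ q → p ≠ r → q ≠ r →
      crossProd (z p) (z q) (z r) ≠ 0)
    (hI : ∀ k j, k + 2 ≤ j → j ≤ M →
      0 < (-1 : ℝ) ^ k * crossProd (z k) (z (k+1)) (z j))
    (hII : ∀ k, 1 ≤ k → k + 1 ≤ M →
      0 < (-1 : ℝ) ^ (k+1) * crossProd (z k) (z (k+1)) (z (k-1)))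
    (p q r s : ℕ) (hpq : p < q) (hq2 : q ≤ p + 2) (hrs : r < s) (hs2 : s ≤ r + 2)
    (hqM : q ≤ M) (hsM : s ≤ M) (hpr : p ≤ r) (hne : (p, q) ≠ (r, s)) :
    ¬ SegCross (z p) (z q) (z r) (z s) := by
  rcases eq_or_lt_of_le hpr with heq | hpr'
  · -- shared first endpoint
    subst heq
    have hqs : q ≠ s := by
      intro h; exact hne (by rw [h])
    exact noCross_shared (z p) (z q) (z s)
      (hcrz p q s (by omega) hqM hsM (by omega) (by omega) hqs)
  · have hu' : q = p + 2 → (-1:ℝ)^(p+1) * crossProd (z (p+1)) (z (p+2)) (z p) < 0 := by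
      intro hq
      have h0 := hII (p+1) (by omega) (by omega)
      have he : (-1:ℝ)^(p+1+1) = -((-1:ℝ)^(p+1)) := by ring
      rw [he] at h0
      have harith : p + 1 - 1 = p := by omega
      rw [harith] at h0
      linarith
    rcases lt_trichotomy r q with hrq | heq | hqr
    · -- p < r < q : q = p+2, r = p+1
      obtain rfl : q = p + 2 := by omega
      obtain rfl : r = p + 1 := by omega
      have hu := hu' rfl
      rcases (by omega : s = p + 2 ∨ s = p + 3) with rfl | rfl
      · -- shared second endpoint z (p+2)
        intro hSC
        obtain ⟨w, hw1, hw2⟩ := hSC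
        rw [openSegment_symm] at hw1 hw2
        exact noCross_shared (z (p+2)) (z p) (z (p+1))
          (hcrz (p+2) p (p+1) hqM (by omega) (by omega) (by omega) (by omega) (by omega))
          ⟨w, hw1, hw2⟩
      · -- interleave
        refine noCross_of_sep ((-1:ℝ)^(p+1)) (z (p+1)) (z (p+2)) (z p) (z (p+2))
          (z (p+1)) (z (p+3)) ?_ ?_ ?_ ?_ ?_
        · exact le_of_lt hu
        · rw [cross_self3]; simp
        · rw [cross_self2]; simp
        · exact le_of_lt (hI (p+1) (p+3) (by omega) hsM)
        · exact Or.inl hu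
    · -- r = q : shared endpoint z q
      subst heq
      intro hSC
      obtain ⟨w, hw1, hw2⟩ := hSC
      rw [openSegment_symm] at hw1
      exact noCross_shared (z r) (z p) (z s)
        (hcrz r p s hqM (by omega) hsM (by omega) (by omega) (by omega)) ⟨w, hw1, hw2⟩
    · -- q < r : separated
      rcases (by omega : q = p + 1 ∨ q = p + 2) with rfl | rfl
      · refine noCross_of_sep ((-1:ℝ)^p) (z p) (z (p+1)) (z p) (z (p+1)) (z r) (z s) ?_ ?_ ?_ ?_ ?_
        · rw [cross_self2]; simp
        · rw [cross_self3]; simp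
        · exact le_of_lt (hI p r (by omega) (by omega))
        · exact le_of_lt (hI p s (by omega) hsM)
        · exact Or.inr ⟨hI p r (by omega) (by omega), hI p s (by omega) hsM⟩
      · have hu := hu' rfl
        refine noCross_of_sep ((-1:ℝ)^(p+1)) (z (p+1)) (z (p+2)) (z p) (z (p+2))
          (z r) (z s) ?_ ?_ ?_ ?_ ?_
        · exact le_of_lt hu
        · rw [cross_self3]; simp
        · exact le_of_lt (hI (p+1) r (by omega) (by omega))
        · exact le_of_lt (hI (p+1) s (by omega) hsM)
        · exact Or.inl hu

end Stmt5Aux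

/-- Lemma of Gritzmann et al. for the ladder graph: every set of `2n`
points in general position carries a non-crossing straight-line copy of the ladder
graph `L_{2n}`. -/
theorem stmt_5 (n : ℕ) (hn : 1 ≤ n) (P : Finset Pt)
    (hcard : P.card = 2 * n) (hgp : GenPos P) :
    ∃ x y : Fin n → Pt, (∀ i, x i ∈ P) ∧ (∀ i, y i ∈ P) ∧
      Function.Injective (Sum.elim x y) ∧
      NoncrossingEdges (ladderEdges n x y) := by
  classical
  open Stmt5Aux in
  have hcr : ∀ p ∈ P, ∀ q ∈ P, ∀ r ∈ P, p ≠ q → p ≠ r → q ≠ r → crossProd p q r ≠ 0 := by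
    intro p hp q hq r hr h1 h2 h3 h0
    exact hgp p hp q hq r hr h1 h2 h3 (Stmt5Aux.collinear_of_cross_zero p q r h0)
  obtain ⟨a, haP, b, hbP, hab, hstart⟩ := Stmt5Aux.exists_start P (by omega) hcr
  obtain ⟨z, hz0, hz1, hzmem, hzinj, hzI, hzII⟩ :=
    Stmt5Aux.build (2*n-2) P hcr (by omega) a b 1 haP hbP hab (by norm_num)
      (fun x hx h1 h2 => by rw [one_mul]; exact hstart x hx h1 h2)
  have hM : 2*n-2+1 = 2*n-1 := by omega
  have hzmem' : ∀ k ≤ 2*n-1, z k ∈ P := by intro k hk; exact hzmem k (by omega)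
  have hzinj' : ∀ k l, k ≤ 2*n-1 → l ≤ 2*n-1 → k ≠ l → z k ≠ z l := by
    intro k l hk hl
    exact hzinj k l (by omega) (by omega)
  have hI' : ∀ k j, k + 2 ≤ j → j ≤ 2*n-1 →
      0 < (-1 : ℝ) ^ k * crossProd (z k) (z (k+1)) (z j) := by
    intro k j h1 h2
    have := hzI k j h1 (by omega)
    rw [one_mul] at this
    exact this
  have hII' : ∀ k, 1 ≤ k → k + 1 ≤ 2*n-1 →
      0 < (-1 : ℝ) ^ (k+1) * crossProd (z k) (z (k+1)) (z (k-1)) := by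
    intro k h1 h2
    have := hzII k h1 (by omega)
    rw [one_mul] at this
    exact this
  have hcrz : ∀ p q r, p ≤ 2*n-1 → q ≤ 2*n-1 → r ≤ 2*n-1 → p ≠ q → p ≠ r → q ≠ r →
      crossProd (z p) (z q) (z r) ≠ 0 := by
    intro p q r hp hq hr h1 h2 h3
    exact hcr (z p) (hzmem' p hp) (z q) (hzmem' q hq) (z r) (hzmem' r hr)
      (hzinj' p q hp hq h1) (hzinj' p r hp hr h2) (hzinj' q r hq hr h3)
  refine ⟨fun i => z (2 * i.1), fun i => z (2 * i.1 + 1), ?_, ?_, ?_, ?_⟩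
  · intro i; exact hzmem' _ (by omega)
  · intro i; have := i.isLt; exact hzmem' _ (by omega)
  · -- injectivity
    intro u v huv
    rcases u with i | i <;> rcases v with j | j <;>
      simp only [Sum.elim_inl, Sum.elim_inr] at huv
    · congr 1
      by_contra hij
      have hvij : (i : ℕ) ≠ (j : ℕ) := fun h => hij (Fin.ext h)
      have := i.isLt; have := j.isLt
      exact hzinj' (2*i.1) (2*j.1) (by omega) (by omega) (by omega) huv
    · exact absurd huv (hzinj' (2*i.1) (2*j.1+1) (by have := i.isLt; omega)
        (by have := j.isLt; omega) (by omega))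
    · exact absurd huv (hzinj' (2*i.1+1) (2*j.1) (by have := i.isLt; omega)
        (by have := j.isLt; omega) (by omega))
    · congr 1
      by_contra hij
      have hvij : (i : ℕ) ≠ (j : ℕ) := fun h => hij (Fin.ext h)
      have := i.isLt; have := j.isLt
      exact hzinj' (2*i.1+1) (2*j.1+1) (by omega) (by omega) (by omega) huv
  · -- non-crossing
    have hrep : ∀ e ∈ ladderEdges n (fun i : Fin n => z (2 * i.1))
        (fun i : Fin n => z (2 * i.1 + 1)),
        ∃ p q : ℕ, p < q ∧ q ≤ p + 2 ∧ q ≤ 2*n-1 ∧ e = (z p, z q) := by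
      rintro e (⟨i, j, hij, rfl⟩ | ⟨i, j, hij, rfl⟩ | ⟨i, rfl⟩)
      · exact ⟨2*i.1, 2*j.1, by omega, by omega, by have := j.isLt; omega, rfl⟩
      · exact ⟨2*i.1+1, 2*j.1+1, by omega, by omega, by have := j.isLt; omega, rfl⟩
      · exact ⟨2*i.1, 2*i.1+1, by omega, by omega, by have := i.isLt; omega, rfl⟩
    intro e he f hf hef
    obtain ⟨p, q, hpq, hq2, hqM, hePQ⟩ := hrep e he
    obtain ⟨r, s, hrs, hs2, hsM, hfRS⟩ := hrep f hf
    have hpairne : (p, q) ≠ (r, s) := by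
      intro h
      apply hef
      rw [hePQ, hfRS]
      rw [Prod.mk.injEq] at h
      rw [h.1, h.2]
    rw [hePQ, hfRS]
    simp only
    by_cases hpr : p ≤ r
    · exact Stmt5Aux.pairs_noCross (2*n-1) z hcrz hI' hII' p q r s hpq hq2 hrs hs2 hqM hsM
        hpr hpairne
    · have h := Stmt5Aux.pairs_noCross (2*n-1) z hcrz hI' hII' r s p q hrs hs2 hpq hq2 hsM hqM
        (by omega) (fun hh => hpairne (by rw [Prod.mk.injEq] at hh; rw [hh.1, hh.2]))
      intro hSC
      obtain ⟨w, h1, h2⟩ := hSC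
      exact h ⟨w, h2, h1⟩

end
end

section
/- Let A and B be mutually avoiding finite point sets in the plane, with the canonical linear orders ≺ on A and on B (the common order in which points of one set see the points of the other). Let u, u' ∈ A with u ≺ u' and let v, v' ∈ B. Then the straight-line segments [u, v] and [u', v'] cross (intersect in an interior point of both) if and only if v' ≺ v. -/
noncomputable section

section AuxLemmas

lemma cp_affine (v v' p q : Pt) (s t : ℝ) (h : s + t = 1) :
    crossProd v v' (s • p + t • q) = s * crossProd v v' p + t * crossProd v v' q := by
  have ht : t = 1 - s := by linarith
  subst ht
  obtain ⟨v1, v2⟩ := v; obtain ⟨w1, w2⟩ := v'; obtain ⟨p1, p2⟩ := p; obtain ⟨q1, q2⟩ := q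
  simp only [crossProd, Prod.smul_mk, Prod.mk_add_mk, smul_eq_mul]
  ring

lemma div_mem_Ioo {x y : ℝ} (h : x * y < 0) : 0 < x / (x - y) ∧ x / (x - y) < 1 := by
  rcases mul_neg_iff.mp h with ⟨hx, hy⟩ | ⟨hx, hy⟩
  · have hd : 0 < x - y := by linarith
    exact ⟨div_pos hx hd, (div_lt_one hd).mpr (by linarith)⟩
  · have h1 : (0:ℝ) < -x := by linarith
    have h2 : (0:ℝ) < y - x := by linarith
    have e : x / (x - y) = -x / (y - x) := by
      rw [div_eq_div_iff (by linarith : x - y < 0).ne h2.ne']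
      ring
    rw [e]
    exact ⟨div_pos h1 h2, (div_lt_one h2).mpr (by linarith)⟩

lemma mem_line (v v' p : Pt) (hvv : v ≠ v') (h : crossProd v v' p = 0) :
    p ∈ (affineSpan ℝ ({v, v'} : Set Pt) : Set Pt) := by
  have hden : (v'.1 - v.1)^2 + (v'.2 - v.2)^2 ≠ 0 := by
    intro h0
    apply hvv
    have h1 : v'.1 - v.1 = 0 ∧ v'.2 - v.2 = 0 := by
      constructor <;> nlinarith [sq_nonneg (v'.1 - v.1), sq_nonneg (v'.2 - v.2)]
    ext <;> [skip; skip] <;> linarith [h1.1, h1.2]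
  set r : ℝ := ((v'.1 - v.1) * (p.1 - v.1) + (v'.2 - v.2) * (p.2 - v.2)) /
      ((v'.1 - v.1)^2 + (v'.2 - v.2)^2) with hr
  have hx : p = AffineMap.lineMap v v' r := by
    have hml : (AffineMap.lineMap v v' r : Pt) = r • (v' - v) + v := by
      simp [AffineMap.lineMap_apply]
    rw [hml, hr]
    obtain ⟨v1, v2⟩ := v; obtain ⟨w1, w2⟩ := v'; obtain ⟨p1, p2⟩ := p
    simp only [crossProd] at h hden ⊢
    simp only [Prod.mk_sub_mk, Prod.smul_mk, Prod.mk_add_mk, Prod.mk.injEq, smul_eq_mul]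
    refine ⟨?_, ?_⟩
    · field_simp
      linear_combination (-(w2 - v2)) * h
    · field_simp
      linear_combination (w1 - v1) * h
  rw [hx]
  exact AffineMap.lineMap_mem_affineSpan_pair _ _ _

lemma sign_const {v v' : Pt} (hvv : v ≠ v') {S : Set Pt}
    (hD : Disjoint ((affineSpan ℝ ({v, v'} : Set Pt) : AffineSubspace ℝ Pt) : Set Pt)
      (convexHull ℝ S))
    {p q : Pt} (hp : p ∈ convexHull ℝ S) (hq : q ∈ convexHull ℝ S) :
    0 < crossProd v v' p * crossProd v v' q := by
  have hne : ∀ z ∈ convexHull ℝ S, crossProd v v' z ≠ 0 := fun z hz h0 =>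
    Set.disjoint_left.mp hD (mem_line v v' z hvv h0) hz
  rcases lt_trichotomy (crossProd v v' p * crossProd v v' q) 0 with h | h | h
  · exfalso
    set fp := crossProd v v' p with hfp
    set fq := crossProd v v' q with hfq
    have hdne : fp - fq ≠ 0 := by
      intro h0
      rw [sub_eq_zero] at h0
      rw [h0] at h
      exact absurd h (not_lt.mpr (mul_self_nonneg fq))
    obtain ⟨ht0, ht1⟩ := div_mem_Ioo h
    set t := fp / (fp - fq) with htdef
    have hz : (1 - t) • p + t • q ∈ convexHull ℝ S :=
      (convex_convexHull ℝ S) hp hq (by linarith) (by linarith) (by ring)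
    apply hne _ hz
    rw [cp_affine v v' p q (1 - t) t (by ring), ← hfp, ← hfq, htdef]
    field_simp
    ring
  · exfalso
    rcases mul_eq_zero.mp h with h0 | h0
    · exact hne p hp h0
    · exact hne q hq h0
  · exact h

lemma segcross_iff (a b c d : Pt)
    (h1 : crossProd a b c ≠ 0) (h2 : crossProd a b d ≠ 0)
    (h3 : crossProd c d a ≠ 0) (h4 : crossProd c d b ≠ 0) :
    SegCross a b c d ↔
      crossProd a b c * crossProd a b d < 0 ∧ crossProd c d a * crossProd c d b < 0 := by
  constructor
  · rintro ⟨x, hx1, hx2⟩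
    rw [openSegment_eq_image] at hx1 hx2
    obtain ⟨t, ⟨ht0, ht1⟩, htx⟩ := hx1
    obtain ⟨s, ⟨hs0, hs1⟩, hsx⟩ := hx2
    have htx' : (1 - t) • a + t • b = x := htx
    have hsx' : (1 - s) • c + s • d = x := hsx
    have hab : crossProd a b x = 0 := by
      rw [← htx', cp_affine a b a b (1 - t) t (by ring)]
      simp only [crossProd]; ring
    have hcd : crossProd c d x = 0 := by
      rw [← hsx', cp_affine c d c d (1 - s) s (by ring)]
      simp only [crossProd]; ring
    have E1 : (1 - s) * crossProd a b c + s * crossProd a b d = 0 := by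
      rw [← cp_affine a b c d (1 - s) s (by ring), hsx']; exact hab
    have E2 : (1 - t) * crossProd c d a + t * crossProd c d b = 0 := by
      rw [← cp_affine c d a b (1 - t) t (by ring), htx']; exact hcd
    have hc2 : 0 < crossProd a b c ^ 2 :=
      lt_of_le_of_ne (sq_nonneg _) (Ne.symm (pow_ne_zero 2 h1))
    have ha2 : 0 < crossProd c d a ^ 2 :=
      lt_of_le_of_ne (sq_nonneg _) (Ne.symm (pow_ne_zero 2 h3))
    constructor
    · have key : s * (crossProd a b c * crossProd a b d) = -((1 - s) * crossProd a b c ^ 2) := by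
        linear_combination crossProd a b c * E1
      nlinarith [key, hc2, hs0, hs1]
    · have key : t * (crossProd c d a * crossProd c d b) = -((1 - t) * crossProd c d a ^ 2) := by
        linear_combination crossProd c d a * E2
      nlinarith [key, ha2, ht0, ht1]
  · rintro ⟨hf, hg⟩
    set ga := crossProd c d a with hga
    set gb := crossProd c d b with hgb
    set fc := crossProd a b c with hfc
    set fd := crossProd a b d with hfd
    have hgne : ga - gb ≠ 0 := by
      intro h0; rw [sub_eq_zero] at h0; rw [h0] at hg
      exact absurd hg (not_lt.mpr (mul_self_nonneg _))
    have hfne : fc - fd ≠ 0 := by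
      intro h0; rw [sub_eq_zero] at h0; rw [h0] at hf
      exact absurd hf (not_lt.mpr (mul_self_nonneg _))
    obtain ⟨ht0, ht1⟩ := div_mem_Ioo hg
    obtain ⟨hs0, hs1⟩ := div_mem_Ioo hf
    set t := ga / (ga - gb) with htdef
    set s := fc / (fc - fd) with hsdef
    have exp_t : t * (ga - gb) = ga := div_mul_cancel₀ _ hgne
    have exp_s : s * (fc - fd) = fc := div_mul_cancel₀ _ hfne
    have hrel : fc - fd = gb - ga := by
      rw [hfc, hfd, hga, hgb]; simp only [crossProd]; ring
    have exp_s' : s * (ga - gb) = -fc := by linear_combination -exp_s + s * hrel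
    have key1 : (ga - gb) * (a.1 - c.1) + ga * (b.1 - a.1) + fc * (d.1 - c.1) = 0 := by
      rw [hga, hgb, hfc]; simp only [crossProd]; ring
    have key2 : (ga - gb) * (a.2 - c.2) + ga * (b.2 - a.2) + fc * (d.2 - c.2) = 0 := by
      rw [hga, hgb, hfc]; simp only [crossProd]; ring
    refine ⟨(1 - t) • a + t • b, ?_, ?_⟩
    · rw [openSegment_eq_image]
      exact ⟨t, ⟨ht0, ht1⟩, rfl⟩
    · rw [openSegment_eq_image]
      refine ⟨s, ⟨hs0, hs1⟩, ?_⟩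
      show (1 - s) • c + s • d = (1 - t) • a + t • b
      rw [Prod.ext_iff]
      constructor
      · simp only [Prod.fst_add, Prod.smul_fst, smul_eq_mul]
        apply mul_left_cancel₀ hgne
        linear_combination (a.1 - b.1) * exp_t + (d.1 - c.1) * exp_s' - key1
      · simp only [Prod.snd_add, Prod.smul_snd, smul_eq_mul]
        apply mul_left_cancel₀ hgne
        linear_combination (a.2 - b.2) * exp_t + (d.2 - c.2) * exp_s' - key2

end AuxLemmas

/-- Proposition `prop:muav`(2): for mutually avoiding sets `A`, `B`
with their canonical orders, `u, u' ∈ A` with `u ≺ u'` and `v, v' ∈ B`, the segments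
`[u, v]` and `[u', v']` cross iff `v' ≺ v`. -/
theorem stmt_6 (A B : Finset Pt) (hAB : MutuallyAvoiding A B)
    (u u' : Pt) (hu : u ∈ A) (hu' : u' ∈ A)
    (v v' : Pt) (hv : v ∈ B) (hv' : v' ∈ B)
    (huu' : precA B u u') :
    SegCross u v u' v' ↔ precB A v' v := by
  obtain ⟨hcA, hcB, hA2B, hB2A⟩ := hAB
  have hv0 : crossProd v u u' < 0 := huu' v hv
  have hv'0 : crossProd v' u u' < 0 := huu' v' hv'
  by_cases hvv : v = v'
  · subst hvv
    constructor
    · rintro ⟨x, hx1, hx2⟩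
      exfalso
      rw [openSegment_eq_image] at hx1 hx2
      obtain ⟨t, ⟨ht0, ht1⟩, htx⟩ := hx1
      obtain ⟨s, ⟨hs0, hs1⟩, hsx⟩ := hx2
      have htx' : (1 - t) • u + t • v = x := htx
      have hsx' : (1 - s) • u' + s • v = x := hsx
      have e1 : crossProd v u x = 0 := by
        rw [← htx', cp_affine v u u v (1 - t) t (by ring)]
        simp only [crossProd]; ring
      have e2 : crossProd v u x = (1 - s) * crossProd v u u' := by
        rw [← hsx', cp_affine v u u' v (1 - s) s (by ring)]
        simp only [crossProd]; ring
      nlinarith [e1, e2, hv0, hs1]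
    · intro hpB
      exfalso
      have h1 := hpB u hu
      have h0 : crossProd u v v = 0 := by simp only [crossProd]; ring
      rw [h0] at h1
      exact lt_irrefl 0 h1
  · have hdisj := hB2A v hv v' hv' hvv
    have huA : u ∈ convexHull ℝ (A : Set Pt) := subset_convexHull ℝ _ hu
    have hu'A : u' ∈ convexHull ℝ (A : Set Pt) := subset_convexHull ℝ _ hu'
    have hgu : crossProd v v' u ≠ 0 := fun h0 =>
      Set.disjoint_left.mp hdisj (mem_line v v' u hvv h0) huA
    have hgu' : crossProd v v' u' ≠ 0 := fun h0 =>
      Set.disjoint_left.mp hdisj (mem_line v v' u' hvv h0) hu'A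
    have e1 : crossProd u v u' = -crossProd v u u' := by simp only [crossProd]; ring
    have e2 : crossProd u v v' = crossProd v v' u := by simp only [crossProd]; ring
    have e3 : crossProd u' v' u = crossProd v' u u' := by simp only [crossProd]; ring
    have e4 : crossProd u' v' v = -crossProd v v' u' := by simp only [crossProd]; ring
    rw [segcross_iff u v u' v' (by rw [e1]; intro h; linarith)
      (by rw [e2]; exact hgu) (by rw [e3]; exact hv'0.ne) (by rw [e4]; simpa using hgu')]
    constructor
    · rintro ⟨hA1, hA2⟩
      intro a ha
      have hu_neg : crossProd v v' u < 0 := by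
        rw [e1, e2] at hA1
        nlinarith [hA1, hv0]
      have hsc : 0 < crossProd v v' u * crossProd v v' a :=
        sign_const hvv hdisj huA (subset_convexHull ℝ _ ha)
      have ha_neg : crossProd v v' a < 0 := by nlinarith [hsc, hu_neg]
      have ea : crossProd a v' v = -crossProd v v' a := by simp only [crossProd]; ring
      rw [ea]
      linarith
    · intro hpB
      have eu : crossProd u v' v = -crossProd v v' u := by simp only [crossProd]; ring
      have eu' : crossProd u' v' v = -crossProd v v' u' := by simp only [crossProd]; ring
      have h5 : crossProd v v' u < 0 := by
        have := hpB u hu; rw [eu] at this; linarith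
      have h6 : crossProd v v' u' < 0 := by
        have := hpB u' hu'; rw [eu'] at this; linarith
      constructor
      · rw [e1, e2]
        have : 0 < -crossProd v u u' := by linarith
        exact mul_neg_of_pos_of_neg this h5
      · rw [e3, e4]
        exact mul_neg_of_neg_of_pos hv'0 (by linarith)


end
end

section
/- Let A and B be mutually avoiding finite point sets in the plane with canonical orders ≺, let x_1 ≺ x_2 ≺ ... ≺ x_n be points of A and y_1 ≺ y_2 ≺ ... ≺ y_n be points of B. Then the straight-line drawing of the ladder graph L_{2n} obtained by using the paths (x_1, ..., x_n) and (y_1, ..., y_n) as the two rails and the segments [x_i, y_i] (i ∈ [n]) as rungs is non-crossing. -/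
noncomputable section

/-! ### Auxiliary lemmas -/

lemma crossProd_rot2 (p q r : Pt) : crossProd p q r = crossProd r p q := by
  simp only [crossProd]; ring

lemma crossProd_swap12 (p q r : Pt) : crossProd p q r = -crossProd q p r := by
  simp only [crossProd]; ring

lemma crossProd_swap23 (p q r : Pt) : crossProd p q r = -crossProd p r q := by
  simp only [crossProd]; ring

lemma crossProd_self12 (p r : Pt) : crossProd p p r = 0 := by
  simp only [crossProd]; ring

lemma crossProd_self23 (p q : Pt) : crossProd p q q = 0 := by
  simp only [crossProd]; ring

lemma seg_coords {z p q : Pt} (h : z ∈ openSegment ℝ p q) :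
    ∃ a c : ℝ, 0 < a ∧ 0 < c ∧ a + c = 1 ∧
      z.1 = a * p.1 + c * q.1 ∧ z.2 = a * p.2 + c * q.2 := by
  obtain ⟨a, c, ha, hc, hac, hz⟩ := h
  refine ⟨a, c, ha, hc, hac, ?_, ?_⟩ <;>
  · rw [← hz]
    simp [Prod.fst_add, Prod.snd_add, Prod.smul_fst, Prod.smul_snd]

lemma segCross_comm {p q r s : Pt} (h : SegCross p q r s) : SegCross r s p q := by
  obtain ⟨z, h1, h2⟩ := h; exact ⟨z, h2, h1⟩

lemma segCross_swapl {p q r s : Pt} (h : SegCross p q r s) : SegCross q p r s := by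
  obtain ⟨z, h1, h2⟩ := h
  exact ⟨z, by rwa [openSegment_symm], h2⟩

lemma segCross_swapr {p q r s : Pt} (h : SegCross p q r s) : SegCross p q s r := by
  obtain ⟨z, h1, h2⟩ := h
  exact ⟨z, h1, by rwa [openSegment_symm]⟩

lemma noSegCross_L1 (b p q r s : Pt) (h1 : crossProd b p q < 0)
    (h2 : 0 ≤ crossProd b r q) (h3 : 0 ≤ crossProd b s q) :
    ¬ SegCross p q r s := by
  rintro ⟨z, hz1, hz2⟩
  obtain ⟨a, c, ha, hc, hac, e1, e2⟩ := seg_coords hz1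
  obtain ⟨d, e, hd, he, hde, f1, f2⟩ := seg_coords hz2
  have hc' : c = 1 - a := by linarith
  have he' : e = 1 - d := by linarith
  subst hc'; subst he'
  have key : a * crossProd b p q = d * crossProd b r q + (1 - d) * crossProd b s q := by
    simp only [crossProd]
    linear_combination (q.2 - b.2) * (e1.symm.trans f1) - (q.1 - b.1) * (e2.symm.trans f2)
  nlinarith [mul_nonneg hd.le h2, mul_nonneg (by linarith : (0:ℝ) ≤ 1 - d) h3,
    mul_neg_of_pos_of_neg ha h1]

lemma noSegCross_L1' (b p q r s : Pt) (h1 : 0 < crossProd b p q)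
    (h2 : crossProd b r q ≤ 0) (h3 : crossProd b s q ≤ 0) :
    ¬ SegCross p q r s := by
  rintro ⟨z, hz1, hz2⟩
  obtain ⟨a, c, ha, hc, hac, e1, e2⟩ := seg_coords hz1
  obtain ⟨d, e, hd, he, hde, f1, f2⟩ := seg_coords hz2
  have hc' : c = 1 - a := by linarith
  have he' : e = 1 - d := by linarith
  subst hc'; subst he'
  have key : a * crossProd b p q = d * crossProd b r q + (1 - d) * crossProd b s q := by
    simp only [crossProd]
    linear_combination (q.2 - b.2) * (e1.symm.trans f1) - (q.1 - b.1) * (e2.symm.trans f2)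
  nlinarith [mul_nonneg hd.le (neg_nonneg.2 h2),
    mul_nonneg (by linarith : (0:ℝ) ≤ 1 - d) (neg_nonneg.2 h3),
    mul_pos ha h1]

lemma sameside_pos (p q r s : Pt) (hr : 0 < crossProd p q r) (hs : 0 < crossProd p q s) :
    ¬ SegCross p q r s := by
  rintro ⟨z, hz1, hz2⟩
  obtain ⟨a, c, ha, hc, hac, e1, e2⟩ := seg_coords hz1
  obtain ⟨d, e, hd, he, hde, f1, f2⟩ := seg_coords hz2
  have h0 : crossProd p q z = 0 := by
    simp only [crossProd]; rw [e1, e2]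
    have hc' : c = 1 - a := by linarith
    subst hc'; ring
  have hpos : crossProd p q z = d * crossProd p q r + e * crossProd p q s := by
    simp only [crossProd]; rw [f1, f2]
    have he' : e = 1 - d := by linarith
    subst he'; ring
  nlinarith [mul_pos hd hr, mul_pos he hs]

lemma sameside_neg (p q r s : Pt) (hr : crossProd p q r < 0) (hs : crossProd p q s < 0) :
    ¬ SegCross p q r s := by
  rintro ⟨z, hz1, hz2⟩
  obtain ⟨a, c, ha, hc, hac, e1, e2⟩ := seg_coords hz1
  obtain ⟨d, e, hd, he, hde, f1, f2⟩ := seg_coords hz2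
  have h0 : crossProd p q z = 0 := by
    simp only [crossProd]; rw [e1, e2]
    have hc' : c = 1 - a := by linarith
    subst hc'; ring
  have hneg : crossProd p q z = d * crossProd p q r + e * crossProd p q s := by
    simp only [crossProd]; rw [f1, f2]
    have he' : e = 1 - d := by linarith
    subst he'; ring
  nlinarith [mul_neg_of_pos_of_neg hd hr, mul_neg_of_pos_of_neg he hs]

/-- Corollary `cor:muavLadder`: for mutually avoiding sets `A`, `B`,
an increasing (w.r.t. the canonical orders) sequence `x` in `A` and an increasing
sequence `y` in `B`, the straight-line drawing of the ladder `L_{2n}` with rails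
`(x i)` and `(y i)` and rungs `[x i, y i]` is non-crossing. -/
theorem stmt_7 (n : ℕ) (hn : 1 ≤ n) (A B : Finset Pt) (hAB : MutuallyAvoiding A B)
    (x y : Fin n → Pt)
    (hxA : ∀ i, x i ∈ A) (hyB : ∀ i, y i ∈ B)
    (hxinc : ∀ i j : Fin n, i < j → precA B (x i) (x j))
    (hyinc : ∀ i j : Fin n, i < j → precB A (y i) (y j)) :
    NoncrossingEdges (ladderEdges n x y) := by
  have hb0 : y ⟨0, hn⟩ ∈ B := hyB _
  have ha0 : x ⟨0, hn⟩ ∈ A := hxA _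
  have Hx : ∀ (i j : Fin n), (i:ℕ) < (j:ℕ) → ∀ b ∈ B, crossProd b (x i) (x j) < 0 :=
    fun i j h b hb => hxinc i j (Fin.lt_def.mpr h) b hb
  have Hy : ∀ (i j : Fin n), (i:ℕ) < (j:ℕ) → ∀ a ∈ A, 0 < crossProd a (y i) (y j) :=
    fun i j h a ha => hyinc i j (Fin.lt_def.mpr h) a ha
  have HxLe : ∀ (i j : Fin n), (i:ℕ) ≤ (j:ℕ) → ∀ b ∈ B, crossProd b (x i) (x j) ≤ 0 := by
    intro i j h b hb
    rcases Nat.lt_or_ge (i:ℕ) (j:ℕ) with h' | h'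
    · exact (Hx i j h' b hb).le
    · have hij : i = j := Fin.ext (le_antisymm h h')
      rw [hij]; exact (crossProd_self23 _ _).le
  have HyLe : ∀ (i j : Fin n), (i:ℕ) ≤ (j:ℕ) → ∀ a ∈ A, 0 ≤ crossProd a (y i) (y j) := by
    intro i j h a ha
    rcases Nat.lt_or_ge (i:ℕ) (j:ℕ) with h' | h'
    · exact (Hy i j h' a ha).le
    · have hij : i = j := Fin.ext (le_antisymm h h')
      rw [hij]; exact (crossProd_self23 _ _).ge
  have XX : ∀ i j k l : Fin n, (i:ℕ)+1 = j → (k:ℕ)+1 = l → (i:ℕ) < (k:ℕ) →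
      ¬ SegCross (x i) (x j) (x k) (x l) := by
    intro i j k l hij hkl hik
    refine noSegCross_L1 (y ⟨0,hn⟩) _ _ _ _ (Hx i j (by omega) _ hb0) ?_ ?_
    · rw [crossProd_swap23]; linarith [HxLe j k (by omega) _ hb0]
    · rw [crossProd_swap23]; linarith [HxLe j l (by omega) _ hb0]
  have YY : ∀ i j k l : Fin n, (i:ℕ)+1 = j → (k:ℕ)+1 = l → (i:ℕ) < (k:ℕ) →
      ¬ SegCross (y i) (y j) (y k) (y l) := by
    intro i j k l hij hkl hik
    refine noSegCross_L1' (x ⟨0,hn⟩) _ _ _ _ (Hy i j (by omega) _ ha0) ?_ ?_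
    · rw [crossProd_swap23]; linarith [HyLe j k (by omega) _ ha0]
    · rw [crossProd_swap23]; linarith [HyLe j l (by omega) _ ha0]
  have XY : ∀ i j k l : Fin n, (i:ℕ) < (j:ℕ) → ¬ SegCross (x i) (x j) (y k) (y l) := by
    intro i j k l hij
    refine sameside_neg _ _ _ _ ?_ ?_
    · rw [crossProd_rot2]; exact Hx i j hij _ (hyB k)
    · rw [crossProd_rot2]; exact Hx i j hij _ (hyB l)
  have XR : ∀ i j k : Fin n, (i:ℕ)+1 = j → ¬ SegCross (x i) (x j) (x k) (y k) := by
    intro i j k hij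
    rcases Nat.lt_or_ge (i:ℕ) (k:ℕ) with h | h
    · refine noSegCross_L1 (y k) _ _ _ _ (Hx i j (by omega) _ (hyB k)) ?_ ?_
      · rw [crossProd_swap23]; linarith [HxLe j k (by omega) _ (hyB k)]
      · exact (crossProd_self12 _ _).ge
    · intro hc
      exact noSegCross_L1' (y k) (x j) (x i) (x k) (y k)
        (by rw [crossProd_swap23]; linarith [Hx i j (by omega) _ (hyB k)])
        (HxLe k i h _ (hyB k))
        (crossProd_self12 _ _).le
        (segCross_swapl hc)
  have YR : ∀ i j k : Fin n, (i:ℕ)+1 = j → ¬ SegCross (y i) (y j) (x k) (y k) := by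
    intro i j k hij hc
    rcases Nat.lt_or_ge (i:ℕ) (k:ℕ) with h | h
    · exact noSegCross_L1' (x k) (y i) (y j) (y k) (x k)
        (Hy i j (by omega) _ (hxA k))
        (by rw [crossProd_swap23]; linarith [HyLe j k (by omega) _ (hxA k)])
        (crossProd_self12 _ _).le
        (segCross_swapr hc)
    · exact noSegCross_L1 (x k) (y j) (y i) (y k) (x k)
        (by rw [crossProd_swap23]; linarith [Hy i j (by omega) _ (hxA k)])
        (HyLe k i h _ (hxA k))
        (crossProd_self12 _ _).ge
        (segCross_swapr (segCross_swapl hc))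
  have RR : ∀ i k : Fin n, (i:ℕ) < (k:ℕ) → ¬ SegCross (x i) (y i) (x k) (y k) := by
    intro i k h
    refine sameside_pos _ _ _ _ ?_ (Hy i k h _ (hxA i))
    rw [crossProd_swap12]; linarith [Hx i k h _ (hyB i)]
  intro e he f hf hef
  rcases he with ⟨i, j, hij, rfl⟩ | ⟨i, j, hij, rfl⟩ | ⟨i, rfl⟩ <;>
    rcases hf with ⟨k, l, hkl, rfl⟩ | ⟨k, l, hkl, rfl⟩ | ⟨k, rfl⟩
  · rcases Nat.lt_trichotomy (i:ℕ) (k:ℕ) with h | h | h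
    · exact XX i j k l hij hkl h
    · refine absurd ?_ hef
      have hik : i = k := Fin.ext h
      have hjl : j = l := Fin.ext (by omega)
      rw [hik, hjl]
    · exact fun hc => XX k l i j hkl hij h (segCross_comm hc)
  · exact XY i j k l (by omega)
  · exact XR i j k hij
  · exact fun hc => XY k l i j (by omega) (segCross_comm hc)
  · rcases Nat.lt_trichotomy (i:ℕ) (k:ℕ) with h | h | h
    · exact YY i j k l hij hkl h
    · refine absurd ?_ hef
      have hik : i = k := Fin.ext h
      have hjl : j = l := Fin.ext (by omega)
      rw [hik, hjl]
    · exact fun hc => YY k l i j hkl hij h (segCross_comm hc)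
  · exact YR i j k hij
  · exact fun hc => XR k l i hkl (segCross_comm hc)
  · exact fun hc => YR k l i hkl (segCross_comm hc)
  · rcases Nat.lt_trichotomy (i:ℕ) (k:ℕ) with h | h | h
    · exact RR i k h
    · refine absurd ?_ hef
      have hik : i = k := Fin.ext h
      rw [hik]
    · exact fun hc => RR k i h (segCross_comm hc)


end
end

section
/- Let n ≥ 1 and let C be a set of points in convex position, 2-colour all segments between pairs of points of C. Suppose there exist disjoint subsets A_1, A_2 ⊆ C with |A_1| = |A_2| = 2n², A_1 preceding A_2 in the convex order (separable by a line), and all segments between A_1 and A_2 having the same colour. Then C contains a monochromatic non-crossing copy of the ladder graph L_{2n}. -/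
noncomputable section

-- ===== auxiliary development =====

-- cross identities
lemma cross_cyc (a b c : Pt) : crossProd b c a = crossProd a b c := by
  simp only [crossProd]; ring

lemma cross_cyc' (a b c : Pt) : crossProd c a b = crossProd a b c := by
  simp only [crossProd]; ring

lemma cross_anti (a b c : Pt) : crossProd a c b = -crossProd a b c := by
  simp only [crossProd]; ring

lemma cross_self₁ (a b : Pt) : crossProd a b a = 0 := by simp only [crossProd]; ring
lemma cross_self₂ (a b : Pt) : crossProd a b b = 0 := by simp only [crossProd]; ring

lemma cross_affine (a b c d : Pt) (u v : ℝ) (huv : u + v = 1) :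
    crossProd a b (u • c + v • d) = u * crossProd a b c + v * crossProd a b d := by
  have hv : v = 1 - u := by linarith
  subst hv
  simp only [crossProd, Prod.fst_add, Prod.snd_add, Prod.smul_fst, Prod.smul_snd,
    smul_eq_mul]
  ring

lemma mem_openSegment' {a b x : Pt} (h : x ∈ openSegment ℝ a b) :
    ∃ u v : ℝ, 0 < u ∧ 0 < v ∧ u + v = 1 ∧ u • a + v • b = x := by
  rw [openSegment] at h; simpa using h

-- SegCross symmetries
lemma segCross_comm_s8 {a b c d : Pt} (h : SegCross a b c d) : SegCross c d a b := by
  obtain ⟨x, hx1, hx2⟩ := h; exact ⟨x, hx2, hx1⟩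

lemma segCross_swap_left {a b c d : Pt} (h : SegCross a b c d) : SegCross b a c d := by
  obtain ⟨x, hx1, hx2⟩ := h; exact ⟨x, by rwa [openSegment_symm], hx2⟩

lemma segCross_swap_right {a b c d : Pt} (h : SegCross a b c d) : SegCross a b d c := by
  exact segCross_comm_s8 (segCross_swap_left (segCross_comm_s8 h))

-- criterion: same strict side of line ab
lemma noCross_of_sameSide {a b c d : Pt} (hc : 0 < crossProd a b c)
    (hd : 0 < crossProd a b d) : ¬ SegCross a b c d := by
  rintro ⟨x, hx1, hx2⟩
  obtain ⟨u, v, hu, hv, huv, hx⟩ := mem_openSegment' hx1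
  obtain ⟨u', v', hu', hv', huv', hx'⟩ := mem_openSegment' hx2
  have h1 : crossProd a b x = 0 := by
    rw [← hx, cross_affine a b a b u v huv, cross_self₁, cross_self₂]; ring
  have h2 : crossProd a b x = u' * crossProd a b c + v' * crossProd a b d := by
    rw [← hx', cross_affine a b c d u' v' huv']
  nlinarith

lemma noCross_of_sameSide' {a b c d : Pt} (hc : crossProd a b c < 0)
    (hd : crossProd a b d < 0) : ¬ SegCross a b c d := by
  rintro ⟨x, hx1, hx2⟩
  obtain ⟨u, v, hu, hv, huv, hx⟩ := mem_openSegment' hx1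
  obtain ⟨u', v', hu', hv', huv', hx'⟩ := mem_openSegment' hx2
  have h1 : crossProd a b x = 0 := by
    rw [← hx, cross_affine a b a b u v huv, cross_self₁, cross_self₂]; ring
  have h2 : crossProd a b x = u' * crossProd a b c + v' * crossProd a b d := by
    rw [← hx', cross_affine a b c d u' v' huv']
  nlinarith

-- shared endpoint: if segments (a,b) and (a,d) cross then a,b,d collinear
lemma segCross_shared {a b d : Pt} (h : SegCross a b a d) : crossProd a b d = 0 := by
  obtain ⟨x, hx1, hx2⟩ := h
  obtain ⟨u, v, hu, hv, huv, hx⟩ := mem_openSegment' hx1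
  obtain ⟨u', v', hu', hv', huv', hx'⟩ := mem_openSegment' hx2
  have h1 : crossProd a b x = 0 := by
    rw [← hx, cross_affine a b a b u v huv, cross_self₁, cross_self₂]; ring
  have h2 : crossProd a b x = v' * crossProd a b d := by
    rw [← hx', cross_affine a b a d u' v' huv', cross_self₁]; ring
  have := h1.symm.trans h2
  rcases mul_eq_zero.1 this.symm with h | h
  · exact absurd h (ne_of_gt hv')
  · exact h

-- parametrization on a line
lemma cross_zero_param {a b x : Pt} (h : crossProd a b x = 0) (hab : a ≠ b) :
    ∃ r : ℝ, x = a + r • (b - a) := by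
  simp only [crossProd] at h
  have hab' : b.1 - a.1 ≠ 0 ∨ b.2 - a.2 ≠ 0 := by
    by_contra hc
    push_neg at hc
    exact hab (Prod.ext (by linarith [hc.1]) (by linarith [hc.2])).symm
  rcases hab' with h1 | h2
  · refine ⟨(x.1 - a.1) / (b.1 - a.1), ?_⟩
    have : x.2 - a.2 = (x.1 - a.1) / (b.1 - a.1) * (b.2 - a.2) := by
      field_simp
      nlinarith
    refine Prod.ext ?_ ?_ <;>
      simp only [Prod.fst_add, Prod.snd_add, Prod.smul_fst, Prod.smul_snd,
        Prod.fst_sub, Prod.snd_sub, smul_eq_mul]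
    · field_simp; ring
    · linarith [this]
  · refine ⟨(x.2 - a.2) / (b.2 - a.2), ?_⟩
    have : x.1 - a.1 = (x.2 - a.2) / (b.2 - a.2) * (b.1 - a.1) := by
      field_simp
      nlinarith
    refine Prod.ext ?_ ?_ <;>
      simp only [Prod.fst_add, Prod.snd_add, Prod.smul_fst, Prod.smul_snd,
        Prod.fst_sub, Prod.snd_sub, smul_eq_mul]
    · linarith [this]
    · field_simp; ring



section CP
variable {C : Finset Pt} (hC : ConvexPos C)

lemma mem_segment_of_coeff {a b x : Pt} {u v : ℝ} (hu : 0 ≤ u) (hv : 0 ≤ v)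
    (huv : u + v = 1) (hx : x = u • a + v • b) : x ∈ segment ℝ a b :=
  ⟨u, v, hu, hv, huv, hx.symm⟩

lemma pair_subset_erase {x y z : Pt} {C : Finset Pt} (hx : x ∈ C) (hy : y ∈ C)
    (hzx : z ≠ x) (hzy : z ≠ y) :
    ({x, y} : Set Pt) ⊆ ((C.erase z : Finset Pt) : Set Pt) := by
  intro w hw
  simp only [Set.mem_insert_iff, Set.mem_singleton_iff] at hw
  rcases hw with hw | hw <;> subst hw
  · exact Finset.mem_coe.2 (Finset.mem_erase.2 ⟨Ne.symm hzx, hx⟩)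
  · exact Finset.mem_coe.2 (Finset.mem_erase.2 ⟨Ne.symm hzy, hy⟩)

include hC in
/-- no three distinct points of C are collinear (cross product nonzero) -/
lemma cross_ne_zero {p q r : Pt} (hp : p ∈ C) (hq : q ∈ C) (hr : r ∈ C)
    (hpq : p ≠ q) (hpr : p ≠ r) (hqr : q ≠ r) : crossProd p q r ≠ 0 := by
  intro h0
  obtain ⟨t, ht⟩ := cross_zero_param h0 hpq
  -- r = p + t (q - p)
  have coords : ∀ w : Pt, w = p + t • (q - p) →
      w.1 = p.1 + t * (q.1 - p.1) ∧ w.2 = p.2 + t * (q.2 - p.2) := by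
    intro w hw
    constructor <;> rw [hw] <;>
      simp [Prod.fst_add, Prod.snd_add, Prod.smul_fst, Prod.smul_snd]
  obtain ⟨hr1, hr2⟩ := coords r ht
  rcases le_or_gt t 0 with h1 | h1
  · -- p between r and q
    have h1t : (0:ℝ) < 1 - t := by linarith
    have hcoef : (1/(1-t)) + (-t/(1-t)) = 1 := by field_simp; ring
    have hmem : p ∈ segment ℝ r q := by
      refine mem_segment_of_coeff (u := 1/(1-t)) (v := -t/(1-t))
        (by positivity) (div_nonneg (by linarith) (by linarith)) hcoef ?_
      refine Prod.ext ?_ ?_ <;>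
        simp only [Prod.fst_add, Prod.snd_add, Prod.smul_fst, Prod.smul_snd,
          smul_eq_mul] <;> [rw [hr1]; rw [hr2]] <;> field_simp <;> ring
    have : p ∈ convexHull ℝ ((C.erase p : Finset Pt) : Set Pt) := by
      rw [← convexHull_pair] at hmem
      exact convexHull_mono (pair_subset_erase hr hq hpr hpq) hmem
    exact hC p hp this
  · rcases le_or_gt t 1 with h2 | h2
    · have hmem : r ∈ segment ℝ p q := by
        refine mem_segment_of_coeff (u := 1-t) (v := t) (by linarith) (by linarith)
          (by ring) ?_
        refine Prod.ext ?_ ?_ <;>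
          simp only [Prod.fst_add, Prod.snd_add, Prod.smul_fst, Prod.smul_snd,
            smul_eq_mul] <;> [rw [hr1]; rw [hr2]] <;> ring
      have : r ∈ convexHull ℝ ((C.erase r : Finset Pt) : Set Pt) := by
        rw [← convexHull_pair] at hmem
        exact convexHull_mono (pair_subset_erase hp hq (Ne.symm hpr) (Ne.symm hqr)) hmem
      exact hC r hr this
    · have ht0 : (0:ℝ) < t := by linarith
      have hmem : q ∈ segment ℝ p r := by
        refine mem_segment_of_coeff (u := 1-1/t) (v := 1/t)
          (by rw [sub_nonneg, div_le_one ht0]; linarith) (by positivity)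
          (by ring) ?_
        refine Prod.ext ?_ ?_ <;>
          simp only [Prod.fst_add, Prod.snd_add, Prod.smul_fst, Prod.smul_snd,
            smul_eq_mul] <;> [rw [hr1]; rw [hr2]] <;> field_simp <;> ring
      have : q ∈ convexHull ℝ ((C.erase q : Finset Pt) : Set Pt) := by
        rw [← convexHull_pair] at hmem
        exact convexHull_mono (pair_subset_erase hp hr (Ne.symm hpq) hqr) hmem
      exact hC q hq this

include hC in
/-- orientation coherence: the barycentric / triangle lemma -/
lemma ok_of_convexPos {p a b c : Pt} (hp : p ∈ C) (ha : a ∈ C) (hb : b ∈ C)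
    (hc : c ∈ C) (hpa : p ≠ a) (hpb : p ≠ b) (hpc : p ≠ c) (hab : a ≠ b)
    (hac : a ≠ c) (hbc : b ≠ c)
    (h1 : 0 < crossProd p a b) (h2 : 0 < crossProd p b c)
    (h3 : 0 < crossProd p a c) : 0 < crossProd a b c := by
  rcases lt_trichotomy (crossProd a b c) 0 with hneg | hzero | hpos
  · exfalso
    set S := crossProd p a c with hS
    set u := -crossProd a b c with hu
    set v := crossProd p b c with hv
    set w := crossProd p a b with hw
    have hsum : u + v + w = S := by
      simp only [hu, hv, hw, hS, crossProd]; ring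
    have hu0 : 0 < u := by simpa [hu] using hneg
    have hvw : 0 < v + w := by positivity
    have hSpos : 0 < S := h3
    set m : Pt := (v/(v+w)) • a + (w/(v+w)) • c with hm
    have hmseg : m ∈ segment ℝ a c :=
      mem_segment_of_coeff (by positivity) (by positivity) (by field_simp) rfl
    have hbseg : b ∈ segment ℝ p m := by
      refine mem_segment_of_coeff (u := u/S) (v := (v+w)/S) (by positivity)
        (by positivity) (by field_simp; linarith) ?_
      have key1 : S * b.1 = u * p.1 + v * a.1 + w * c.1 := by
        simp only [hu, hv, hw, hS, crossProd]; ring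
      have key2 : S * b.2 = u * p.2 + v * a.2 + w * c.2 := by
        simp only [hu, hv, hw, hS, crossProd]; ring
      have hS' : S ≠ 0 := ne_of_gt hSpos
      have hvw' : v + w ≠ 0 := ne_of_gt hvw
      have e1 : b.1 = (u*p.1+v*a.1+w*c.1)/S := by
        rw [eq_div_iff hS']; linear_combination key1
      have e2 : b.2 = (u*p.2+v*a.2+w*c.2)/S := by
        rw [eq_div_iff hS']; linear_combination key2
      refine Prod.ext ?_ ?_ <;>
        simp only [hm, Prod.fst_add, Prod.snd_add, Prod.smul_fst, Prod.smul_snd,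
          smul_eq_mul] <;> [rw [e1]; rw [e2]] <;> field_simp <;> ring
    have : b ∈ convexHull ℝ ((C.erase b : Finset Pt) : Set Pt) := by
      have h1' : m ∈ convexHull ℝ ({a, c} : Set Pt) := by
        rw [convexHull_pair]; exact hmseg
      have h2' : b ∈ convexHull ℝ (insert p ({a, c} : Set Pt)) := by
        rw [convexHull_insert ⟨a, by simp⟩, mem_convexJoin]
        exact ⟨p, rfl, m, h1', hbseg⟩
      refine convexHull_mono ?_ h2'
      intro z hz
      simp only [Set.mem_insert_iff, Set.mem_singleton_iff] at hz
      rcases hz with hz | hz | hz <;> subst hz <;>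
        exact Finset.mem_coe.2 (Finset.mem_erase.2 ⟨by simp_all [Ne, eq_comm], by assumption⟩)
    exact hC b hb this
  · exact absurd hzero (cross_ne_zero hC ha hb hc hab hac hbc)
  · exact hpos
end CP

/-- All (ordered) triples of the list are positively oriented. -/
def Cvx (l : List Pt) : Prop :=
  ∀ x y z : Pt, [x, y, z].Sublist l → 0 < crossProd x y z

lemma Cvx.sublist {l l' : List Pt} (h : Cvx l) (hs : l'.Sublist l) : Cvx l' :=
  fun x y z hxyz => h x y z (hxyz.trans hs)

lemma Cvx.rotate {l₁ l₂ : List Pt} (h : Cvx (l₁ ++ l₂)) : Cvx (l₂ ++ l₁) := by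
  intro x y z hs
  rw [List.sublist_append_iff] at hs
  obtain ⟨s, t, hst, hs2, ht1⟩ := hs
  have : s = [] ∨ s = [x] ∨ s = [x,y] ∨ s = [x,y,z] := by
    have hlen : s.length ≤ 3 := by
      have h' := congrArg List.length hst
      simp at h'; omega
    rcases s with _ | ⟨a, _ | ⟨b, _ | ⟨c, _ | ⟨d, s⟩⟩⟩⟩
    · exact Or.inl rfl
    · right; left
      have := hst; simp at this; simp [this.1]
    · right; right; left
      have := hst; simp at this; simp [this.1, this.2.1]
    · right; right; right
      have := hst; simp at this; simp [this.1, this.2.1, this.2.2]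
    · exfalso; simp at hlen; omega
  rcases this with rfl | rfl | rfl | rfl
  · simp at hst
    subst hst
    exact h x y z (ht1.trans (List.sublist_append_left l₁ l₂))
  · have ht : t = [y, z] := by simpa using hst.symm
    subst ht
    have : List.Sublist [y, z, x] (l₁ ++ l₂) := by
      have h1 : List.Sublist [y, z] l₁ := ht1
      have h2 : List.Sublist [x] l₂ := hs2
      have := List.Sublist.append h1 h2
      simpa using this
    have := h y z x this
    rwa [cross_cyc] at this
  · have ht : t = [z] := by simpa using hst.symm
    subst ht
    have : List.Sublist [z, x, y] (l₁ ++ l₂) := by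
      have h1 : List.Sublist [z] l₁ := ht1
      have h2 : List.Sublist [x, y] l₂ := hs2
      have := List.Sublist.append h1 h2
      simpa using this
    have := h z x y this
    rwa [cross_cyc'] at this
  · have ht : t = [] := by simpa using hst
    subst ht
    exact h x y z (hs2.trans (List.sublist_append_right l₁ l₂))

open Classical in
lemma core' (P : Finset Pt)
    (H0 : ∀ p ∈ P, ∀ q ∈ P, ∀ r ∈ P, p ≠ q → p ≠ r → q ≠ r → crossProd p q r ≠ 0)
    (H1 : ∀ p ∈ P, ∀ a ∈ P, ∀ b ∈ P, ∀ c ∈ P,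
      p ≠ a → p ≠ b → p ≠ c → a ≠ b → a ≠ c → b ≠ c →
      0 < crossProd p a b → 0 < crossProd p b c → 0 < crossProd p a c →
      0 < crossProd a b c)
    (Hy : ∀ p ∈ P, ∀ q ∈ P, p ≠ q → p.2 ≠ q.2) :
    ∃ l : List Pt, l.Nodup ∧ (∀ p, p ∈ l ↔ p ∈ P) ∧ Cvx l := by
  rcases P.eq_empty_or_nonempty with rfl | hne
  · exact ⟨[], List.nodup_nil, by simp, fun x y z hs => by simp at hs⟩
  obtain ⟨p₀, hp₀, hmin⟩ := P.exists_min_image (fun p => p.2) hne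
  set Q := P.erase p₀ with hQ
  have hQP : ∀ q ∈ Q, q ∈ P := fun q hq => Finset.mem_of_mem_erase hq
  have hQne : ∀ q ∈ Q, q ≠ p₀ := fun q hq => Finset.ne_of_mem_erase hq
  have hy : ∀ q ∈ Q, p₀.2 < q.2 := by
    intro q hq
    have h1 := hmin q (hQP q hq)
    have h2 := Hy q (hQP q hq) p₀ hp₀ (hQne q hq)
    cases lt_or_eq_of_le h1 with
    | inl h => exact h
    | inr h => exact absurd h.symm h2
  set key : Pt → ℝ := fun q => -((q.1 - p₀.1)/(q.2 - p₀.2)) with hkey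
  -- positivity from key order
  have keypos : ∀ q ∈ Q, ∀ r ∈ Q, key q < key r → 0 < crossProd p₀ q r := by
    intro q hq r hr hlt
    have dq : 0 < q.2 - p₀.2 := by have := hy q hq; linarith
    have dr : 0 < r.2 - p₀.2 := by have := hy r hr; linarith
    have : crossProd p₀ q r = (key r - key q) * ((q.2 - p₀.2) * (r.2 - p₀.2)) := by
      simp only [hkey, crossProd]
      field_simp
      ring
    rw [this]
    have : 0 < key r - key q := by linarith
    positivity
  have keyinj : ∀ q ∈ Q, ∀ r ∈ Q, key q = key r → q = r := by
    intro q hq r hr he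
    by_contra hne'
    have dq : 0 < q.2 - p₀.2 := by have := hy q hq; linarith
    have dr : 0 < r.2 - p₀.2 := by have := hy r hr; linarith
    have : crossProd p₀ q r = (key r - key q) * ((q.2 - p₀.2) * (r.2 - p₀.2)) := by
      simp only [hkey, crossProd]; field_simp; ring
    have hz : crossProd p₀ q r = 0 := by rw [this, he]; ring
    exact H0 p₀ hp₀ q (hQP q hq) r (hQP r hr) (Ne.symm (hQne q hq))
      (Ne.symm (hQne r hr)) hne' hz
  set K := Q.image key with hK
  set g : ℝ → Pt := fun k =>
    if h : ∃ q ∈ Q, key q = k then h.choose else p₀ with hg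
  have hgspec : ∀ k ∈ K, g k ∈ Q ∧ key (g k) = k := by
    intro k hk
    rw [hK, Finset.mem_image] at hk
    obtain ⟨q, hq, hkq⟩ := hk
    have hex : ∃ q ∈ Q, key q = k := ⟨q, hq, hkq⟩
    simp only [hg, dif_pos hex]
    exact ⟨hex.choose_spec.1, hex.choose_spec.2⟩
  set l' : List Pt := (K.sort (· ≤ ·)).map g with hl'
  have hmem' : ∀ p, p ∈ l' ↔ p ∈ Q := by
    intro p
    constructor
    · intro hp
      rw [hl', List.mem_map] at hp
      obtain ⟨k, hk, hgk⟩ := hp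
      rw [Finset.mem_sort] at hk
      exact hgk ▸ (hgspec k hk).1
    · intro hp
      rw [hl', List.mem_map]
      refine ⟨key p, ?_, ?_⟩
      · rw [Finset.mem_sort, hK]
        exact Finset.mem_image_of_mem key hp
      · have hk : key p ∈ K := by rw [hK]; exact Finset.mem_image_of_mem key hp
        obtain ⟨h1, h2⟩ := hgspec (key p) hk
        exact keyinj _ h1 _ hp h2
  have hkeylt : ∀ u v : Pt, List.Sublist [u, v] l' → u ∈ Q ∧ v ∈ Q ∧ key u < key v := by
    intro u v hs
    rw [hl', List.sublist_map_iff] at hs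
    obtain ⟨l'', hsub, heq⟩ := hs
    rcases l'' with _ | ⟨a, _ | ⟨b, _ | ⟨c, l''⟩⟩⟩ <;> simp at heq
    obtain ⟨hua, hvb⟩ := heq
    have haK : a ∈ K := Finset.mem_sort (α := ℝ) (· ≤ ·) |>.1 (hsub.subset (by simp))
    have hbK : b ∈ K := Finset.mem_sort (α := ℝ) (· ≤ ·) |>.1 (hsub.subset (by simp))
    have hsorted : List.Pairwise (· < ·) (K.sort (· ≤ ·)) := (Finset.sortedLT_sort K).pairwise
    have hab : a < b := by
      have := hsorted.sublist hsub
      simp at this; exact this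
    obtain ⟨ha1, ha2⟩ := hgspec a haK
    obtain ⟨hb1, hb2⟩ := hgspec b hbK
    exact ⟨hua ▸ ha1, hvb ▸ hb1, by rw [hua, hvb, ha2, hb2]; exact hab⟩
  have hnodup' : l'.Nodup := by
    rw [hl']
    refine List.Nodup.map_on ?_ (K.sort_nodup (· ≤ ·))
    intro a ha b hb hab
    rw [Finset.mem_sort] at ha hb
    rw [← (hgspec a ha).2, ← (hgspec b hb).2, hab]
  refine ⟨p₀ :: l', ?_, ?_, ?_⟩
  · rw [List.nodup_cons]
    exact ⟨fun h => hQne p₀ ((hmem' p₀).1 h) rfl, hnodup'⟩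
  · intro p
    rw [List.mem_cons, hmem']
    constructor
    · rintro (rfl | hp)
      · exact hp₀
      · exact hQP p hp
    · intro hp
      by_cases hpp : p = p₀
      · exact Or.inl hpp
      · exact Or.inr (Finset.mem_erase.2 ⟨hpp, hp⟩)
  · intro x y z hs
    rw [List.sublist_cons_iff] at hs
    rcases hs with hs | ⟨r, hr, hrs⟩
    · -- [x,y,z] <+ l'
      have hxy := hkeylt x y (List.Sublist.trans (by simp) hs)
      have hyz := hkeylt y z (List.Sublist.trans (by simp) hs)
      have hxz := hkeylt x z (List.Sublist.trans (by simp) hs)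
      obtain ⟨hxQ, hyQ, kxy⟩ := hxy
      obtain ⟨-, hzQ, kyz⟩ := hyz
      obtain ⟨-, -, kxz⟩ := hxz
      have hxy' : x ≠ y := fun h => by rw [h] at kxy; exact lt_irrefl _ kxy
      have hyz' : y ≠ z := fun h => by rw [h] at kyz; exact lt_irrefl _ kyz
      have hxz' : x ≠ z := fun h => by rw [h] at kxz; exact lt_irrefl _ kxz
      exact H1 p₀ hp₀ x (hQP x hxQ) y (hQP y hyQ) z (hQP z hzQ)
        (Ne.symm (hQne x hxQ)) (Ne.symm (hQne y hyQ)) (Ne.symm (hQne z hzQ))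
        hxy' hxz' hyz'
        (keypos x hxQ y hyQ kxy) (keypos y hyQ z hzQ kyz) (keypos x hxQ z hzQ kxz)
    · -- x = p₀
      have hx : x = p₀ := by injection hr
      have hyzr : [y, z] = r := by injection hr with h1 h2
      subst hx
      have : List.Sublist [y, z] l' := by
        rw [hyzr]; exact hrs
      obtain ⟨hyQ, hzQ, kyz⟩ := hkeylt y z this
      exact keypos y hyQ z hzQ kyz

def shear (t : ℝ) (p : Pt) : Pt := (p.1, t * p.1 + p.2)

lemma shear_cross (t : ℝ) (p q r : Pt) :
    crossProd (shear t p) (shear t q) (shear t r) = crossProd p q r := by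
  simp only [crossProd, shear]; ring

lemma shear_inj (t : ℝ) : Function.Injective (shear t) := by
  intro p q h
  simp only [shear, Prod.mk.injEq] at h
  obtain ⟨h1, h2⟩ := h
  rw [h1] at h2
  exact Prod.ext h1 (by linarith)

lemma shear_inv (t : ℝ) (p : Pt) : shear (-t) (shear t p) = p := by
  simp only [shear]; exact Prod.ext rfl (by ring)

lemma core (P : Finset Pt)
    (H0 : ∀ p ∈ P, ∀ q ∈ P, ∀ r ∈ P, p ≠ q → p ≠ r → q ≠ r → crossProd p q r ≠ 0)
    (H1 : ∀ p ∈ P, ∀ a ∈ P, ∀ b ∈ P, ∀ c ∈ P,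
      p ≠ a → p ≠ b → p ≠ c → a ≠ b → a ≠ c → b ≠ c →
      0 < crossProd p a b → 0 < crossProd p b c → 0 < crossProd p a c →
      0 < crossProd a b c) :
    ∃ l : List Pt, l.Nodup ∧ (∀ p, p ∈ l ↔ p ∈ P) ∧ Cvx l := by
  classical
  -- choose a good shear parameter
  set T : Finset ℝ := (P ×ˢ P).image
    (fun pq => (pq.2.2 - pq.1.2) / (pq.1.1 - pq.2.1)) with hT
  obtain ⟨t, ht⟩ := Infinite.exists_notMem_finset T
  set P' : Finset Pt := P.image (shear t) with hP'
  have memP' : ∀ p', p' ∈ P' ↔ ∃ p ∈ P, shear t p = p' := by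
    intro p'; rw [hP', Finset.mem_image]
  have Hy' : ∀ p' ∈ P', ∀ q' ∈ P', p' ≠ q' → p'.2 ≠ q'.2 := by
    intro p' hp' q' hq' hne
    obtain ⟨p, hp, rfl⟩ := (memP' p').1 hp'
    obtain ⟨q, hq, rfl⟩ := (memP' q').1 hq'
    have hpq : p ≠ q := fun h => hne (by rw [h])
    simp only [shear]
    intro heq
    by_cases h1 : p.1 = q.1
    · rw [h1] at heq
      exact hpq (Prod.ext h1 (by linarith))
    · apply ht
      rw [hT, Finset.mem_image]
      refine ⟨(p, q), Finset.mem_product.2 ⟨hp, hq⟩, ?_⟩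
      have hd : p.1 - q.1 ≠ 0 := fun h => h1 (by linarith)
      field_simp
      nlinarith
  have H0' : ∀ p ∈ P', ∀ q ∈ P', ∀ r ∈ P', p ≠ q → p ≠ r → q ≠ r →
      crossProd p q r ≠ 0 := by
    intro p' hp' q' hq' r' hr' h1 h2 h3
    obtain ⟨p, hp, rfl⟩ := (memP' p').1 hp'
    obtain ⟨q, hq, rfl⟩ := (memP' q').1 hq'
    obtain ⟨r, hr, rfl⟩ := (memP' r').1 hr'
    rw [shear_cross]
    exact H0 p hp q hq r hr (fun h => h1 (by rw [h])) (fun h => h2 (by rw [h]))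
      (fun h => h3 (by rw [h]))
  have H1' : ∀ p ∈ P', ∀ a ∈ P', ∀ b ∈ P', ∀ c ∈ P',
      p ≠ a → p ≠ b → p ≠ c → a ≠ b → a ≠ c → b ≠ c →
      0 < crossProd p a b → 0 < crossProd p b c → 0 < crossProd p a c →
      0 < crossProd a b c := by
    intro p' hp' a' ha' b' hb' c' hc' h1 h2 h3 h4 h5 h6
    obtain ⟨p, hp, rfl⟩ := (memP' p').1 hp'
    obtain ⟨a, ha, rfl⟩ := (memP' a').1 ha'
    obtain ⟨b, hb, rfl⟩ := (memP' b').1 hb'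
    obtain ⟨c, hc, rfl⟩ := (memP' c').1 hc'
    rw [shear_cross, shear_cross, shear_cross, shear_cross]
    exact H1 p hp a ha b hb c hc (fun h => h1 (by rw [h])) (fun h => h2 (by rw [h]))
      (fun h => h3 (by rw [h])) (fun h => h4 (by rw [h])) (fun h => h5 (by rw [h]))
      (fun h => h6 (by rw [h]))
  obtain ⟨l', hnd', hmem', hcvx'⟩ := core' P' H0' H1' Hy'
  refine ⟨l'.map (shear (-t)), ?_, ?_, ?_⟩
  · exact hnd'.map (shear_inj (-t))
  · intro p
    rw [List.mem_map]
    constructor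
    · rintro ⟨a, ha, rfl⟩
      obtain ⟨b, hb, rfl⟩ := (memP' a).1 ((hmem' a).1 ha)
      rwa [shear_inv]
    · intro hp
      refine ⟨shear t p, (hmem' _).2 ((memP' _).2 ⟨p, hp, rfl⟩), shear_inv t p⟩
  · intro x y z hs
    rw [List.sublist_map_iff] at hs
    obtain ⟨l'', hsub, heq⟩ := hs
    rcases l'' with _ | ⟨a, _ | ⟨b, _ | ⟨c, l''⟩⟩⟩ <;> simp at heq
    obtain ⟨rfl, rfl, rfl, rfl⟩ := heq
    have := hcvx' a b c hsub
    rw [shear_cross]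
    exact this

/-- Diagonals of a positively oriented convex quadrilateral cross; hence the four
vertices cannot alternate across a separating line. -/
lemma quad_no_alternate (q1 q2 q3 q4 : Pt) (a b c : ℝ)
    (hf1 : a * q1.1 + b * q1.2 < c) (hf2 : c < a * q2.1 + b * q2.2)
    (hf3 : a * q3.1 + b * q3.2 < c) (hf4 : c < a * q4.1 + b * q4.2)
    (h123 : 0 < crossProd q1 q2 q3) (h124 : 0 < crossProd q1 q2 q4)
    (h134 : 0 < crossProd q1 q3 q4) (h234 : 0 < crossProd q2 q3 q4) : False := by
  have hU1 : 0 < crossProd q2 q4 q1 := by rw [cross_cyc]; exact h124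
  have hV1 : crossProd q2 q4 q3 < 0 := by
    rw [cross_anti]; linarith
  set U1 := crossProd q2 q4 q1 with hU1'
  set V1 := crossProd q2 q4 q3 with hV1'
  have hUV : 0 < U1 - V1 := by linarith
  set s := U1 / (U1 - V1) with hs
  have hs0 : 0 < s := by positivity
  have hs1 : s < 1 := by
    rw [hs, div_lt_one hUV]; linarith
  set z : Pt := (1 - s) • q1 + s • q3 with hz
  -- f z < c
  have hfz : a * z.1 + b * z.2 < c := by
    have : a * z.1 + b * z.2 = (1-s) * (a * q1.1 + b * q1.2) + s * (a * q3.1 + b * q3.2) := by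
      simp only [hz, Prod.fst_add, Prod.snd_add, Prod.smul_fst, Prod.smul_snd, smul_eq_mul]
      ring
    rw [this]
    nlinarith
  -- z on line q2 q4
  have hzline : crossProd q2 q4 z = 0 := by
    rw [hz, cross_affine q2 q4 q1 q3 (1-s) s (by ring), ← hU1', ← hV1', hs]
    have h' : U1 - V1 ≠ 0 := ne_of_gt hUV
    field_simp
    ring
  have hq24 : q2 ≠ q4 := by
    intro h
    rw [h, cross_self₂] at h124
    exact lt_irrefl _ h124
  obtain ⟨r, hr⟩ := cross_zero_param hzline hq24
  have hzr : z = (1 - r) • q2 + r • q4 := by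
    rw [hr]
    refine Prod.ext ?_ ?_ <;>
      simp only [Prod.fst_add, Prod.snd_add, Prod.smul_fst, Prod.smul_snd,
        Prod.fst_sub, Prod.snd_sub, smul_eq_mul] <;> ring
  -- r > 0
  have e1 : crossProd q1 q2 z = s * crossProd q1 q2 q3 := by
    rw [hz, cross_affine q1 q2 q1 q3 (1-s) s (by ring), cross_self₁]; ring
  have e2 : crossProd q1 q2 z = r * crossProd q1 q2 q4 := by
    rw [hzr, cross_affine q1 q2 q2 q4 (1-r) r (by ring), cross_self₂]; ring
  have hr0 : 0 < r := by
    have : 0 < r * crossProd q1 q2 q4 := by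
      rw [← e2, e1]; exact mul_pos hs0 h123
    by_contra h
    push_neg at h
    nlinarith
  -- r < 1
  have e3 : crossProd q3 q4 z = (1-s) * crossProd q3 q4 q1 := by
    rw [hz, cross_affine q3 q4 q1 q3 (1-s) s (by ring), cross_self₁]; ring
  have e4 : crossProd q3 q4 z = (1-r) * crossProd q3 q4 q2 := by
    rw [hzr, cross_affine q3 q4 q2 q4 (1-r) r (by ring), cross_self₂]; ring
  have h341 : 0 < crossProd q3 q4 q1 := by rw [cross_cyc]; exact h134
  have h342 : 0 < crossProd q3 q4 q2 := by rw [cross_cyc]; exact h234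
  have hr1 : r < 1 := by
    have : 0 < (1-r) * crossProd q3 q4 q2 := by
      rw [← e4, e3]; exact mul_pos (by linarith) h341
    by_contra h
    push_neg at h
    nlinarith
  -- f z > c : contradiction
  have : c < a * z.1 + b * z.2 := by
    have : a * z.1 + b * z.2 = (1-r) * (a * q2.1 + b * q2.2) + r * (a * q4.1 + b * q4.2) := by
      rw [hzr]
      simp only [Prod.fst_add, Prod.snd_add, Prod.smul_fst, Prod.smul_snd, smul_eq_mul]
      ring
    rw [this]
    nlinarith
  linarith

section Alt
variable (p : Pt → Prop)

lemma quad_sub {h x1 y1 z1 : Pt} {x y z : List Pt}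
    (hx : x1 ∈ x) (hy : y1 ∈ y) (hz : z1 ∈ z) :
    List.Sublist [h, x1, y1, z1] (h :: (x ++ y ++ z)) := by
  have : List.Sublist ([h] ++ ([x1] ++ ([y1] ++ [z1]))) ([h] ++ (x ++ (y ++ z))) :=
    (List.Sublist.refl [h]).append ((List.singleton_sublist.2 hx).append
      ((List.singleton_sublist.2 hy).append (List.singleton_sublist.2 hz)))
  simpa using this

/-- every list is T*F*T*, or F*T*F*, or contains a 4-term alternation. -/
lemma alt_lemma (l : List Pt) :
    (∃ x y z : List Pt, l = x ++ y ++ z ∧ (∀ e ∈ x, p e) ∧ (∀ e ∈ y, ¬ p e) ∧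
      (∀ e ∈ z, p e)) ∨
    (∃ x y z : List Pt, l = x ++ y ++ z ∧ (∀ e ∈ x, ¬ p e) ∧ (∀ e ∈ y, p e) ∧
      (∀ e ∈ z, ¬ p e)) ∨
    (∃ w x y z : Pt, List.Sublist [w, x, y, z] l ∧
      ((p w ∧ ¬ p x ∧ p y ∧ ¬ p z) ∨ (¬ p w ∧ p x ∧ ¬ p y ∧ p z))) := by
  classical
  induction l with
  | nil => exact Or.inl ⟨[], [], [], by simp, by simp, by simp, by simp⟩
  | cons h l ih =>
    rcases ih with ⟨x, y, z, rfl, hx, hy, hz⟩ | ⟨x, y, z, rfl, hx, hy, hz⟩ |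
      ⟨w, x, y, z, hsub, halt⟩
    · -- l = T*F*T*
      by_cases hp : p h
      · refine Or.inl ⟨h :: x, y, z, by simp, ?_, hy, hz⟩
        intro e he
        rcases List.mem_cons.1 he with rfl | he
        · exact hp
        · exact hx e he
      · rcases List.eq_nil_or_concat' x with rfl | ⟨x', x1, rfl⟩
        · rcases List.eq_nil_or_concat' y with rfl | ⟨y', y1, rfl⟩
          · exact Or.inr (Or.inl ⟨[h], z, [], by simp, by simpa using hp, hz, by simp⟩)
          · refine Or.inr (Or.inl ⟨h :: (y' ++ [y1]), z, [], by simp, ?_, hz, by simp⟩)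
            intro e he
            rcases List.mem_cons.1 he with rfl | he
            · exact hp
            · exact hy e he
        · rcases List.eq_nil_or_concat' y with rfl | ⟨y', y1, rfl⟩
          · refine Or.inr (Or.inl ⟨[h], (x' ++ [x1]) ++ z, [], by simp, by simpa using hp,
              ?_, by simp⟩)
            intro e he
            rcases List.mem_append.1 he with he | he
            · exact hx e he
            · exact hz e he
          · rcases List.eq_nil_or_concat' z with rfl | ⟨z', z1, rfl⟩
            · exact Or.inr (Or.inl ⟨[h], x' ++ [x1], y' ++ [y1], by simp,
                by simpa using hp, hx, hy⟩)
            · refine Or.inr (Or.inr ⟨h, x1, y1, z1,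
                quad_sub (by simp) (by simp) (by simp), Or.inr ?_⟩)
              exact ⟨hp, hx x1 (by simp), hy y1 (by simp), hz z1 (by simp)⟩
    · -- l = F*T*F*
      by_cases hp : p h
      · rcases List.eq_nil_or_concat' x with rfl | ⟨x', x1, rfl⟩
        · refine Or.inl ⟨h :: y, z, [], by simp, ?_, hz, by simp⟩
          intro e he
          rcases List.mem_cons.1 he with rfl | he
          · exact hp
          · exact hy e he
        · rcases List.eq_nil_or_concat' y with rfl | ⟨y', y1, rfl⟩
          · refine Or.inl ⟨[h], (x' ++ [x1]) ++ z, [], by simp, by simpa using hp,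
              ?_, by simp⟩
            intro e he
            rcases List.mem_append.1 he with he | he
            · exact hx e he
            · exact hz e he
          · rcases List.eq_nil_or_concat' z with rfl | ⟨z', z1, rfl⟩
            · exact Or.inl ⟨[h], x' ++ [x1], y' ++ [y1], by simp,
                by simpa using hp, hx, hy⟩
            · refine Or.inr (Or.inr ⟨h, x1, y1, z1,
                quad_sub (by simp) (by simp) (by simp), Or.inl ?_⟩)
              exact ⟨hp, hx x1 (by simp), hy y1 (by simp), hz z1 (by simp)⟩
      · refine Or.inr (Or.inl ⟨h :: x, y, z, by simp, ?_, hy, hz⟩)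
        intro e he
        rcases List.mem_cons.1 he with rfl | he
        · exact hp
        · exact hx e he
    · exact Or.inr (Or.inr ⟨w, x, y, z, hsub.trans (List.sublist_cons_self h _), halt⟩)
end Alt

lemma split_convex (A₁ A₂ : Finset Pt) (hd : Disjoint A₁ A₂)
    (a b c : ℝ) (hsepA : ∀ p ∈ A₁, a * p.1 + b * p.2 < c)
    (hsepB : ∀ q ∈ A₂, c < a * q.1 + b * q.2)
    (l : List Pt) (hnd : l.Nodup) (hmem : ∀ x, x ∈ l ↔ x ∈ A₁ ∪ A₂)
    (hcvx : Cvx l) :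
    ∃ la lb : List Pt, (la ++ lb).Nodup ∧ Cvx (la ++ lb) ∧
      (∀ x, x ∈ la ↔ x ∈ A₁) ∧ (∀ x, x ∈ lb ↔ x ∈ A₂) := by
  classical
  have hmem1 : ∀ x ∈ l, x ∈ A₁ ∨ x ∈ A₂ := by
    intro x hx
    have := (hmem x).1 hx
    rwa [Finset.mem_union] at this
  have hnotA : ∀ x ∈ l, x ∉ A₁ → x ∈ A₂ := by
    intro x hx h1
    rcases hmem1 x hx with h | h
    · exact absurd h h1
    · exact h
  rcases alt_lemma (· ∈ A₁) l with ⟨x, y, z, rfl, hx, hy, hz⟩ |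
    ⟨x, y, z, rfl, hx, hy, hz⟩ | ⟨w, x, y, z, hsub, halt⟩
  · -- T*F*T* : la = z ++ x, lb = y
    refine ⟨z ++ x, y, ?_, ?_, ?_, ?_⟩
    · have h1 : ((x ++ y) ++ z).Perm (z ++ (x ++ y)) := List.perm_append_comm
      have hperm : (x ++ y ++ z).Perm ((z ++ x) ++ y) := by
        simpa [List.append_assoc] using h1
      exact hperm.nodup hnd
    · have h2 := Cvx.rotate (l₁ := x ++ y) (l₂ := z) hcvx
      rwa [← List.append_assoc] at h2
    · intro e
      constructor
      · intro he
        rcases List.mem_append.1 he with he | he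
        · exact hz e he
        · exact hx e he
      · intro he
        have hel : e ∈ x ++ y ++ z := (hmem e).2 (Finset.mem_union_left _ he)
        rcases List.mem_append.1 hel with hel | hel
        · rcases List.mem_append.1 hel with hel | hel
          · exact List.mem_append.2 (Or.inr hel)
          · exact absurd he (hy e hel)
        · exact List.mem_append.2 (Or.inl hel)
    · intro e
      constructor
      · intro he
        exact hnotA e (by simp [List.mem_append]; tauto) (hy e he)
      · intro he
        have he1 : e ∉ A₁ := fun h => (Finset.disjoint_left.1 hd) h he
        have hel : e ∈ x ++ y ++ z := (hmem e).2 (Finset.mem_union_right _ he)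
        rcases List.mem_append.1 hel with hel | hel
        · rcases List.mem_append.1 hel with hel | hel
          · exact absurd (hx e hel) he1
          · exact hel
        · exact absurd (hz e hel) he1
  · -- F*T*F* : la = y, lb = z ++ x
    refine ⟨y, z ++ x, ?_, ?_, ?_, ?_⟩
    · have h1 : (x ++ (y ++ z)).Perm ((y ++ z) ++ x) := List.perm_append_comm
      have hperm : (x ++ y ++ z).Perm (y ++ (z ++ x)) := by
        simpa [List.append_assoc] using h1
      exact hperm.nodup hnd
    · have h1 : Cvx (x ++ (y ++ z)) := by rwa [← List.append_assoc]
      have h2 := Cvx.rotate (l₁ := x) (l₂ := y ++ z) h1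
      rwa [List.append_assoc] at h2
    · intro e
      constructor
      · intro he
        exact hy e he
      · intro he
        have hel : e ∈ x ++ y ++ z := (hmem e).2 (Finset.mem_union_left _ he)
        rcases List.mem_append.1 hel with hel | hel
        · rcases List.mem_append.1 hel with hel | hel
          · exact absurd (by simpa using hx e hel) (by simpa using he)
          · exact hel
        · exact absurd (hz e hel) (by simp [he])
    · intro e
      constructor
      · intro he
        rcases List.mem_append.1 he with he | he
        · exact hnotA e (by simp [List.mem_append]; tauto) (hz e he)
        · exact hnotA e (by simp [List.mem_append]; tauto) (hx e he)
      · intro he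
        have he1 : e ∉ A₁ := fun h => (Finset.disjoint_left.1 hd) h he
        have hel : e ∈ x ++ y ++ z := (hmem e).2 (Finset.mem_union_right _ he)
        rcases List.mem_append.1 hel with hel | hel
        · rcases List.mem_append.1 hel with hel | hel
          · exact List.mem_append.2 (Or.inr hel)
          · exact absurd hel (fun h => he1 (hy e h))
        · exact List.mem_append.2 (Or.inl hel)
  · -- alternation: contradiction
    exfalso
    have hwl : w ∈ l := hsub.subset (by simp)
    have hxl : x ∈ l := hsub.subset (by simp)
    have hyl : y ∈ l := hsub.subset (by simp)
    have hzl : z ∈ l := hsub.subset (by simp)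
    have t1 : 0 < crossProd w x y := hcvx w x y (List.Sublist.trans (by simp) hsub)
    have t2 : 0 < crossProd w x z := hcvx w x z (List.Sublist.trans (by simp) hsub)
    have t3 : 0 < crossProd w y z := hcvx w y z (List.Sublist.trans (by simp) hsub)
    have t4 : 0 < crossProd x y z := hcvx x y z (List.Sublist.trans (by simp) hsub)
    rcases halt with ⟨h1, h2, h3, h4⟩ | ⟨h1, h2, h3, h4⟩
    · exact quad_no_alternate w x y z a b c (hsepA w h1) (hsepB x (hnotA x hxl h2))
        (hsepA y h3) (hsepB z (hnotA z hzl h4)) t1 t2 t3 t4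
    · exact quad_no_alternate w x y z (-a) (-b) (-c)
        (by have := hsepB w (hnotA w hwl h1); linarith)
        (by have := hsepA x h2; linarith)
        (by have := hsepB y (hnotA y hyl h3); linarith)
        (by have := hsepA z h4; linarith) t1 t2 t3 t4

open Classical in
lemma es_lemma (n m : ℕ) (hn : 1 ≤ n) (hm : 2 * n ^ 2 ≤ m)
    (g : Fin m → Fin m → Bool) (c₀ : Bool) :
    (∃ s : Fin n → Fin m, StrictMono s ∧
      ∀ i : ℕ, (h : i + 1 < n) → g (s ⟨i, by omega⟩) (s ⟨i+1, h⟩) = c₀) ∨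
    (∃ s : Fin (2*n) → Fin m, StrictMono s ∧
      ∀ i j : Fin (2*n), i < j → g (s i) (s j) = !c₀) := by
  have hm0 : 0 < m := by nlinarith
  -- P v k : there is a c₀-path with k edges ending at v
  set P : Fin m → ℕ → Prop := fun v k =>
    ∃ s : Fin (k+1) → Fin m, StrictMono s ∧
      (∀ i : Fin k, g (s i.castSucc) (s i.succ) = c₀) ∧ s (Fin.last k) = v with hP
  have hP0 : ∀ v, P v 0 := by
    intro v
    refine ⟨fun _ => v, ?_, fun i => i.elim0, rfl⟩
    intro i j hij
    exact absurd hij (by have h1 := i.2; have h2 := j.2; rw [Fin.lt_def]; omega)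
  have hPbound : ∀ v k, P v k → k + 1 ≤ m := by
    intro v k ⟨s, hs, _, _⟩
    have := Fintype.card_le_of_injective s hs.injective
    simpa using this
  set h : Fin m → ℕ := fun v => Nat.findGreatest (P v) m with hh
  have hPh : ∀ v, P v (h v) := by
    intro v
    exact Nat.findGreatest_spec (Nat.zero_le m) (hP0 v)
  have hstep : ∀ u v : Fin m, u < v → g u v = c₀ → h u + 1 ≤ h v := by
    intro u v huv hc
    obtain ⟨s, hs, hedge, hlast⟩ := hPh u
    set s' : Fin (h u + 1 + 1) → Fin m := Fin.snoc s v with hs'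
    have hsv : ∀ i : Fin (h u + 1), s i < v := by
      intro i
      calc s i ≤ s (Fin.last _) := hs.monotone (Fin.le_last i)
      _ = u := hlast
      _ < v := huv
    have hs'm : StrictMono s' := by
      intro i j hij
      rcases Fin.eq_castSucc_or_eq_last j with ⟨j', rfl⟩ | rfl
      · rcases Fin.eq_castSucc_or_eq_last i with ⟨i', rfl⟩ | rfl
        · simp only [hs', Fin.snoc_castSucc]
          exact hs (by exact_mod_cast hij)
        · exact absurd hij (by
            have hj := j'.isLt
            simp only [Fin.lt_def, Fin.val_last, Fin.coe_castSucc]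
            omega)
      · rcases Fin.eq_castSucc_or_eq_last i with ⟨i', rfl⟩ | rfl
        · simp only [hs', Fin.snoc_castSucc, Fin.snoc_last]
          exact hsv i'
        · exact absurd hij (lt_irrefl _)
    have hPv : P v (h u + 1) := by
      refine ⟨s', hs'm, ?_, by simp [hs', Fin.snoc_last]⟩
      intro i
      rcases Fin.eq_castSucc_or_eq_last i with ⟨i', rfl⟩ | rfl
      · rw [Fin.succ_castSucc]
        simp only [hs', Fin.snoc_castSucc]
        exact hedge i'
      · rw [Fin.succ_last]
        simp only [hs', Fin.snoc_castSucc, Fin.snoc_last, hlast]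
        exact hc
    have hb : h u + 1 + 1 ≤ m := hPbound v _ hPv
    exact Nat.le_findGreatest (by omega) hPv
  by_cases hcase : ∃ v, n - 1 ≤ h v
  · -- long c₀ path
    obtain ⟨v, hv⟩ := hcase
    obtain ⟨s, hs, hedge, -⟩ := hPh v
    have hle : n ≤ h v + 1 := by omega
    refine Or.inl ⟨fun i => s (Fin.castLE hle i), hs.comp (fun i j hij => hij), ?_⟩
    intro i hi
    have := hedge ⟨i, by omega⟩
    convert this using 2 <;> simp [Fin.castSucc, Fin.succ, Fin.castLE] <;> rfl
  · push_neg at hcase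
    -- all levels ≤ n-2 : big fiber is a (!c₀)-clique
    have hmap : ∀ v : Fin m, v ∈ Finset.univ → h v ∈ Finset.range (n-1) := by
      intro v _
      rw [Finset.mem_range]
      exact hcase v
    have hcard : (Finset.range (n-1)).card * (2*n - 1) < (Finset.univ : Finset (Fin m)).card := by
      rw [Finset.card_range, Finset.card_univ, Fintype.card_fin]
      obtain ⟨k, rfl⟩ : ∃ k, n = k + 1 := ⟨n-1, by omega⟩
      have h1 : k + 1 - 1 = k := by omega
      have h2 : 2*(k+1) - 1 = 2*k+1 := by omega
      rw [h1, h2]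
      nlinarith
    obtain ⟨y, -, hy⟩ := Finset.exists_lt_card_fiber_of_mul_lt_card_of_maps_to hmap hcard
    set T := Finset.filter (fun v => h v = y) Finset.univ with hT
    have hTcard : 2*n ≤ T.card := by omega
    set e := T.orderIsoOfFin rfl with he
    refine Or.inr ⟨fun i => (e (Fin.castLE hTcard i) : Fin m), ?_, ?_⟩
    · intro i j hij
      have : Fin.castLE hTcard i < Fin.castLE hTcard j := hij
      exact_mod_cast e.strictMono this
    · intro i j hij
      set u := (e (Fin.castLE hTcard i) : Fin m)
      set v := (e (Fin.castLE hTcard j) : Fin m)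
      have huv : u < v := by
        have : Fin.castLE hTcard i < Fin.castLE hTcard j := hij
        exact_mod_cast e.strictMono this
      have hu : h u = y := (Finset.mem_filter.1 (e (Fin.castLE hTcard i)).2).2
      have hv : h v = y := (Finset.mem_filter.1 (e (Fin.castLE hTcard j)).2).2
      by_contra hne
      have : g u v = c₀ := by
        revert hne; generalize g u v = b; cases b <;> cases c₀ <;> decide
      have := hstep u v huv this
      omega

lemma get_triple_sub (l : List Pt) (a b c : Fin l.length) (hab : a.1 < b.1)
    (hbc : b.1 < c.1) : List.Sublist [l.get a, l.get b, l.get c] l := by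
  have hp : List.Pairwise (fun x1 x2 : Fin l.length => (x1:ℕ) < (x2:ℕ)) [a, b, c] := by
    simp
    omega
  simpa using List.map_getElem_sublist hp

lemma tripos {l : List Pt} (hcvx : Cvx l) {a b c : Fin l.length} (hab : a.1 < b.1)
    (hbc : b.1 < c.1) : 0 < crossProd (l.get a) (l.get b) (l.get c) :=
  hcvx _ _ _ (get_triple_sub l a b c hab hbc)

/-- cross product of any three points of the list with distinct indices is nonzero -/
lemma tri_ne {l : List Pt} (hcvx : Cvx l) {a b c : Fin l.length}
    (hab : a.1 ≠ b.1) (hac : a.1 ≠ c.1) (hbc : b.1 ≠ c.1) :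
    crossProd (l.get a) (l.get b) (l.get c) ≠ 0 := by
  intro h0
  rcases lt_trichotomy a.1 b.1 with h1 | h1 | h1
  · rcases lt_trichotomy b.1 c.1 with h2 | h2 | h2
    · have := tripos hcvx h1 h2
      simp only [crossProd] at this h0; linarith
    · exact hbc h2
    · rcases lt_trichotomy a.1 c.1 with h3 | h3 | h3
      · have := tripos hcvx h3 h2
        simp only [crossProd] at this h0; linarith
      · exact hac h3
      · have := tripos hcvx h3 h1
        simp only [crossProd] at this h0; linarith
  · exact hab h1
  · rcases lt_trichotomy a.1 c.1 with h2 | h2 | h2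
    · have := tripos hcvx h1 h2
      simp only [crossProd] at this h0; linarith
    · exact hac h2
    · rcases lt_trichotomy b.1 c.1 with h3 | h3 | h3
      · have := tripos hcvx h3 h2
        simp only [crossProd] at this h0; linarith
      · exact hbc h3
      · have := tripos hcvx h3 h1
        simp only [crossProd] at this h0; linarith

lemma nonx {l : List Pt} (hcvx : Cvx l) (p1 p2 q1 q2 : Fin l.length)
    (h12 : p1.1 < p2.1) (h34 : q1.1 < q2.1)
    (hni : q2.1 ≤ p1.1 ∨ p2.1 ≤ q1.1 ∨ (p1.1 ≤ q1.1 ∧ q2.1 ≤ p2.1) ∨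
      (q1.1 ≤ p1.1 ∧ p2.1 ≤ q2.1))
    (hne : ¬(p1 = q1 ∧ p2 = q2)) :
    ¬ SegCross (l.get p1) (l.get p2) (l.get q1) (l.get q2) := by
  intro hsc
  by_cases e11 : p1.1 = q1.1
  · -- A = C
    have hAC : l.get p1 = l.get q1 := by rw [Fin.ext e11]
    have hp2q2 : p2.1 ≠ q2.1 := fun h => hne ⟨Fin.ext e11, Fin.ext h⟩
    have hz : crossProd (l.get p1) (l.get p2) (l.get q2) = 0 := by
      refine segCross_shared ?_
      rwa [← hAC] at hsc
    exact tri_ne hcvx (by omega) (by omega) hp2q2 hz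
  by_cases e22 : p2.1 = q2.1
  · -- B = D
    have hBD : l.get p2 = l.get q2 := by rw [Fin.ext e22]
    have hz : crossProd (l.get p2) (l.get p1) (l.get q1) = 0 := by
      refine segCross_shared ?_
      have := segCross_swap_right (segCross_swap_left hsc)
      rwa [← hBD] at this
    exact tri_ne hcvx (by omega) (by omega) e11 hz
  by_cases e12 : p1.1 = q2.1
  · -- A = D
    have hAD : l.get p1 = l.get q2 := by rw [Fin.ext e12]
    have hz : crossProd (l.get p1) (l.get p2) (l.get q1) = 0 := by
      refine segCross_shared ?_
      have := segCross_swap_right hsc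
      rwa [← hAD] at this
    exact tri_ne hcvx (by omega) e11 (by omega) hz
  by_cases e21 : p2.1 = q1.1
  · -- B = C
    have hBC : l.get p2 = l.get q1 := by rw [Fin.ext e21]
    have hz : crossProd (l.get p2) (l.get p1) (l.get q2) = 0 := by
      refine segCross_shared ?_
      have := segCross_swap_left hsc
      rwa [← hBC] at this
    exact tri_ne hcvx (by omega) e22 (by omega) hz
  -- all indices distinct
  rcases hni with h | h | ⟨h, h'⟩ | ⟨h, h'⟩
  · -- q1 < q2 < p1 < p2
    have hq2p1 : q2.1 < p1.1 := by omega
    have c1 : 0 < crossProd (l.get q1) (l.get q2) (l.get p1) := tripos hcvx h34 hq2p1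
    have c2 : 0 < crossProd (l.get q1) (l.get q2) (l.get p2) :=
      tripos hcvx h34 (by omega)
    exact noCross_of_sameSide c1 c2 (segCross_comm_s8 hsc)
  · -- p1 < p2 < q1 < q2
    have c1 : 0 < crossProd (l.get p1) (l.get p2) (l.get q1) :=
      tripos hcvx h12 (by omega)
    have c2 : 0 < crossProd (l.get p1) (l.get p2) (l.get q2) :=
      tripos hcvx h12 (by omega)
    exact noCross_of_sameSide c1 c2 hsc
  · -- p1 < q1 < q2 < p2 : nested
    have hp1q1 : p1.1 < q1.1 := by omega
    have hq2p2 : q2.1 < p2.1 := by omega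
    have c1 : 0 < crossProd (l.get q1) (l.get q2) (l.get p1) := by
      have := tripos hcvx hp1q1 h34
      simp only [crossProd] at this ⊢; linarith
    have c2 : 0 < crossProd (l.get q1) (l.get q2) (l.get p2) :=
      tripos hcvx h34 hq2p2
    exact noCross_of_sameSide c1 c2 (segCross_comm_s8 hsc)
  · -- q1 < p1 < p2 < q2 : nested
    have hq1p1 : q1.1 < p1.1 := by omega
    have hp2q2 : p2.1 < q2.1 := by omega
    have c1 : 0 < crossProd (l.get p1) (l.get p2) (l.get q1) := by
      have := tripos hcvx hq1p1 h12
      simp only [crossProd] at this ⊢; linarith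
    have c2 : 0 < crossProd (l.get p1) (l.get p2) (l.get q2) :=
      tripos hcvx h12 hp2q2
    exact noCross_of_sameSide c1 c2 hsc

lemma master (n : ℕ) (C : Finset Pt) (χ : Pt → Pt → Bool) (c : Bool)
    (L : List Pt) (hcvx : Cvx L) (hnd : L.Nodup) (hmemC : ∀ x ∈ L, x ∈ C)
    (σ τ : Fin n → Fin L.length)
    (hσ : ∀ i j : Fin n, (i:ℕ) < (j:ℕ) → (σ i).1 < (σ j).1)
    (hτ : ∀ i j : Fin n, (i:ℕ) < (j:ℕ) → (τ j).1 < (τ i).1)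
    (hστ : ∀ i j : Fin n, (σ i).1 < (τ j).1)
    (hcol : ∀ e ∈ ladderEdges n (fun i => L.get (σ i)) (fun i => L.get (τ i)),
      χ e.1 e.2 = c) :
    MonoNoncrossingLadder n C χ := by
  classical
  set x : Fin n → Pt := fun i => L.get (σ i) with hx
  set y : Fin n → Pt := fun i => L.get (τ i) with hy
  have hσle : ∀ i j : Fin n, (i:ℕ) ≤ (j:ℕ) → (σ i).1 ≤ (σ j).1 := by
    intro i j hij
    rcases eq_or_lt_of_le hij with h | h
    · rw [Fin.ext (h : (i:ℕ) = (j:ℕ))]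
    · exact le_of_lt (hσ i j h)
  have hτle : ∀ i j : Fin n, (i:ℕ) ≤ (j:ℕ) → (τ j).1 ≤ (τ i).1 := by
    intro i j hij
    rcases eq_or_lt_of_le hij with h | h
    · rw [Fin.ext (h : (i:ℕ) = (j:ℕ))]
    · exact le_of_lt (hτ i j h)
  have getinj : Function.Injective L.get := List.nodup_iff_injective_get.1 hnd
  have hSinj : ∀ a b : Fin n, (σ a).1 = (σ b).1 → a = b := by
    intro a b h
    rcases lt_trichotomy (a:ℕ) (b:ℕ) with hlt | he | hlt
    · have := hσ a b hlt; omega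
    · exact Fin.ext he
    · have := hσ b a hlt; omega
  have hTinj : ∀ a b : Fin n, (τ a).1 = (τ b).1 → a = b := by
    intro a b h
    rcases lt_trichotomy (a:ℕ) (b:ℕ) with hlt | he | hlt
    · have := hτ a b hlt; omega
    · exact Fin.ext he
    · have := hτ b a hlt; omega
  refine ⟨c, x, y, fun i => hmemC _ (L.get_mem _), fun i => hmemC _ (L.get_mem _),
    ?_, hcol, ?_⟩
  · -- injectivity
    intro u v huv
    match u, v with
    | Sum.inl a, Sum.inl b =>
      have : σ a = σ b := getinj huv
      rw [hSinj a b (congrArg Fin.val this)]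
    | Sum.inl a, Sum.inr b =>
      have : σ a = τ b := getinj huv
      have h1 := hστ a b
      rw [this] at h1
      omega
    | Sum.inr a, Sum.inl b =>
      have : τ a = σ b := getinj huv
      have h1 := hστ b a
      rw [this] at h1
      omega
    | Sum.inr a, Sum.inr b =>
      have : τ a = τ b := getinj huv
      rw [hTinj a b (congrArg Fin.val this)]
  · -- non-crossing
    intro e he f hf hef hsc
    rcases he with ⟨i, j, hij, rfl⟩ | ⟨i, j, hij, rfl⟩ | ⟨i, rfl⟩ <;>
      rcases hf with ⟨k, l, hkl, rfl⟩ | ⟨k, l, hkl, rfl⟩ | ⟨k, rfl⟩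
    · -- x-rail vs x-rail
      rcases lt_trichotomy (i:ℕ) (k:ℕ) with h | h | h
      · exact nonx hcvx (σ i) (σ j) (σ k) (σ l) (hσ i j (by omega)) (hσ k l (by omega))
          (Or.inr (Or.inl (hσle j k (by omega)))) (by
            rintro ⟨h1, -⟩
            have := congrArg Fin.val h1
            have := hσ i k h
            omega) hsc
      · refine absurd ?_ hef
        have : i = k := Fin.ext h
        subst this
        have : j = l := Fin.ext (by omega)
        subst this
        rfl
      · exact nonx hcvx (σ i) (σ j) (σ k) (σ l) (hσ i j (by omega)) (hσ k l (by omega))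
          (Or.inl (hσle l i (by omega))) (by
            rintro ⟨h1, -⟩
            have := congrArg Fin.val h1
            have := hσ k i h
            omega) hsc
    · -- x-rail vs y-rail
      exact nonx hcvx (σ i) (σ j) (τ l) (τ k) (hσ i j (by omega)) (hτ k l (by omega))
        (Or.inr (Or.inl (le_of_lt (hστ j l)))) (by
          rintro ⟨h1, -⟩
          have := congrArg Fin.val h1
          have := hστ i l
          omega) (segCross_swap_right hsc)
    · -- x-rail vs rung
      rcases lt_trichotomy (k:ℕ) (i:ℕ) with h | h | h
      · exact nonx hcvx (σ i) (σ j) (σ k) (τ k) (hσ i j (by omega)) (hστ k k)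
          (Or.inr (Or.inr (Or.inr ⟨le_of_lt (hσ k i h), le_of_lt (hστ j k)⟩)))
          (by
            rintro ⟨h1, -⟩
            have := congrArg Fin.val h1
            have := hσ k i h
            omega) hsc
      · exact nonx hcvx (σ i) (σ j) (σ k) (τ k) (hσ i j (by omega)) (hστ k k)
          (Or.inr (Or.inr (Or.inr ⟨hσle k i (by omega), le_of_lt (hστ j k)⟩)))
          (by
            rintro ⟨-, h2⟩
            have := congrArg Fin.val h2
            have := hστ j k
            omega) hsc
      · exact nonx hcvx (σ i) (σ j) (σ k) (τ k) (hσ i j (by omega)) (hστ k k)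
          (Or.inr (Or.inl (hσle j k (by omega))))
          (by
            rintro ⟨h1, -⟩
            have := congrArg Fin.val h1
            have := hσ i k h
            omega) hsc
    · -- y-rail vs x-rail
      exact nonx hcvx (τ j) (τ i) (σ k) (σ l) (hτ i j (by omega)) (hσ k l (by omega))
        (Or.inl (le_of_lt (hστ l j))) (by
          rintro ⟨h1, -⟩
          have := congrArg Fin.val h1
          have := hστ k j
          omega) (segCross_swap_left hsc)
    · -- y-rail vs y-rail
      rcases lt_trichotomy (i:ℕ) (k:ℕ) with h | h | h
      · exact nonx hcvx (τ j) (τ i) (τ l) (τ k) (hτ i j (by omega)) (hτ k l (by omega))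
          (Or.inl (hτle j k (by omega))) (by
            rintro ⟨h1, -⟩
            have := congrArg Fin.val h1
            have := hτ j l (by omega)
            omega) (segCross_swap_right (segCross_swap_left hsc))
      · refine absurd ?_ hef
        have : i = k := Fin.ext h
        subst this
        have : j = l := Fin.ext (by omega)
        subst this
        rfl
      · exact nonx hcvx (τ j) (τ i) (τ l) (τ k) (hτ i j (by omega)) (hτ k l (by omega))
          (Or.inr (Or.inl (hτle l i (by omega)))) (by
            rintro ⟨h1, -⟩
            have := congrArg Fin.val h1
            have := hτ l j (by omega)
            omega) (segCross_swap_right (segCross_swap_left hsc))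
    · -- y-rail vs rung
      rcases le_or_gt (k:ℕ) (i:ℕ) with h | h
      · exact nonx hcvx (τ j) (τ i) (σ k) (τ k) (hτ i j (by omega)) (hστ k k)
          (Or.inr (Or.inr (Or.inr ⟨le_of_lt (hστ k j), hτle k i h⟩)))
          (by
            rintro ⟨h1, -⟩
            have := congrArg Fin.val h1
            have := hστ k j
            omega) (segCross_swap_left hsc)
      · exact nonx hcvx (τ j) (τ i) (σ k) (τ k) (hτ i j (by omega)) (hστ k k)
          (Or.inl (hτle j k (by omega)))
          (by
            rintro ⟨h1, -⟩
            have := congrArg Fin.val h1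
            have := hστ k j
            omega) (segCross_swap_left hsc)
    · -- rung vs x-rail
      rcases le_or_gt (i:ℕ) (k:ℕ) with h | h
      · exact nonx hcvx (σ i) (τ i) (σ k) (σ l) (hστ i i) (hσ k l (by omega))
          (Or.inr (Or.inr (Or.inl ⟨hσle i k h, le_of_lt (hστ l i)⟩)))
          (by
            rintro ⟨-, h2⟩
            have := congrArg Fin.val h2
            have := hστ l i
            omega) hsc
      · exact nonx hcvx (σ i) (τ i) (σ k) (σ l) (hστ i i) (hσ k l (by omega))
          (Or.inl (hσle l i (by omega)))
          (by
            rintro ⟨h1, -⟩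
            have := congrArg Fin.val h1
            have := hσ k i h
            omega) hsc
    · -- rung vs y-rail
      rcases le_or_gt (i:ℕ) (k:ℕ) with h | h
      · exact nonx hcvx (σ i) (τ i) (τ l) (τ k) (hστ i i) (hτ k l (by omega))
          (Or.inr (Or.inr (Or.inl ⟨le_of_lt (hστ i l), hτle i k h⟩)))
          (by
            rintro ⟨h1, -⟩
            have := congrArg Fin.val h1
            have := hστ i l
            omega) (segCross_swap_right hsc)
      · exact nonx hcvx (σ i) (τ i) (τ l) (τ k) (hστ i i) (hτ k l (by omega))
          (Or.inr (Or.inl (hτle l i (by omega))))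
          (by
            rintro ⟨h1, -⟩
            have := congrArg Fin.val h1
            have := hστ i l
            omega) (segCross_swap_right hsc)
    · -- rung vs rung
      rcases lt_trichotomy (i:ℕ) (k:ℕ) with h | h | h
      · exact nonx hcvx (σ i) (τ i) (σ k) (τ k) (hστ i i) (hστ k k)
          (Or.inr (Or.inr (Or.inl ⟨le_of_lt (hσ i k h), le_of_lt (hτ i k h)⟩)))
          (by
            rintro ⟨h1, -⟩
            have := congrArg Fin.val h1
            have := hσ i k h
            omega) hsc
      · refine absurd ?_ hef
        have : i = k := Fin.ext h
        subst this
        rfl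
      · exact nonx hcvx (σ i) (τ i) (σ k) (τ k) (hστ i i) (hστ k k)
          (Or.inr (Or.inr (Or.inr ⟨le_of_lt (hσ k i h), le_of_lt (hτ k i h)⟩)))
          (by
            rintro ⟨h1, -⟩
            have := congrArg Fin.val h1
            have := hσ k i h
            omega) hsc

lemma get_app_left (l1 l2 : List Pt) (i : ℕ) (h : i < l1.length)
    (h2 : i < (l1 ++ l2).length) : (l1 ++ l2).get ⟨i, h2⟩ = l1.get ⟨i, h⟩ := by
  simp [List.get_eq_getElem, List.getElem_append_left h]

lemma get_app_right (l1 l2 : List Pt) (i : ℕ) (h : i < l2.length)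
    (h2 : l1.length + i < (l1 ++ l2).length) :
    (l1 ++ l2).get ⟨l1.length + i, h2⟩ = l2.get ⟨i, h⟩ := by
  simp only [List.get_eq_getElem, List.getElem_append_right
    (show l1.length ≤ l1.length + i by omega)]
  congr 1
  omega

lemma clique_case (n : ℕ) (hn : 1 ≤ n) (C : Finset Pt) (χ : Pt → Pt → Bool)
    (hsym : ∀ p q, χ p q = χ q p) (c : Bool) (l : List Pt) (hcvx : Cvx l)
    (hnd : l.Nodup) (hmemC : ∀ x ∈ l, x ∈ C) (s : Fin (2*n) → Fin l.length)
    (hs : StrictMono s)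
    (hclique : ∀ i j : Fin (2*n), i < j → χ (l.get (s i)) (l.get (s j)) = c) :
    MonoNoncrossingLadder n C χ := by
  have hsv : ∀ a b : Fin (2*n), (a:ℕ) < (b:ℕ) → (s a).1 < (s b).1 := by
    intro a b h
    exact hs (Fin.mk_lt_mk.2 (by omega) : (⟨a.1, a.2⟩ : Fin (2*n)) < ⟨b.1, b.2⟩)
  set σ : Fin n → Fin l.length := fun i => s ⟨(i:ℕ), by omega⟩ with hσdef
  set τ : Fin n → Fin l.length := fun i => s ⟨2*n-1-(i:ℕ), by omega⟩ with hτdef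
  refine master n C χ c l hcvx hnd hmemC σ τ ?_ ?_ ?_ ?_
  · intro i j hij
    exact hsv _ _ (by simpa using hij)
  · intro i j hij
    refine hsv _ _ ?_
    simp only []
    have := i.2
    have := j.2
    omega
  · intro i j
    refine hsv _ _ ?_
    simp only []
    have := i.2
    have := j.2
    omega
  · intro e he
    rcases he with ⟨i, j, hij, rfl⟩ | ⟨i, j, hij, rfl⟩ | ⟨i, rfl⟩
    · exact hclique _ _ (Fin.mk_lt_mk.2 (by omega))
    · rw [hsym]
      exact hclique _ _ (Fin.mk_lt_mk.2 (by have := j.2; omega))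
    · exact hclique _ _ (Fin.mk_lt_mk.2 (by have := i.2; omega))


/-- Lemma `l:completeBipartite`: if a symmetric 2-colouring of the
complete geometric graph on a set `C` in convex position has a monochromatic
well-split (line-separated) complete bipartite graph `K_{2n², 2n²}` on disjoint
parts `A₁, A₂ ⊆ C`, then it contains a monochromatic non-crossing `L_{2n}`. -/
theorem stmt_8 (n : ℕ) (hn : 1 ≤ n) (C : Finset Pt) (hC : ConvexPos C)
    (χ : Pt → Pt → Bool) (hsym : ∀ p q, χ p q = χ q p)
    (A₁ A₂ : Finset Pt) (h₁ : A₁ ⊆ C) (h₂ : A₂ ⊆ C) (hd : Disjoint A₁ A₂)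
    (hc₁ : A₁.card = 2 * n ^ 2) (hc₂ : A₂.card = 2 * n ^ 2)
    (hsep : SeparatedByLine A₁ A₂)
    (c₀ : Bool) (hmono : ∀ p ∈ A₁, ∀ q ∈ A₂, χ p q = c₀) :
    MonoNoncrossingLadder n C χ := by
  classical
  obtain ⟨fa, fb, fc, -, hsepA, hsepB⟩ := hsep
  set A : Finset Pt := A₁ ∪ A₂ with hA
  have hAC : ∀ p ∈ A, p ∈ C := by
    intro p hp
    rcases Finset.mem_union.1 hp with h | h
    · exact h₁ h
    · exact h₂ h
  have H0 : ∀ p ∈ A, ∀ q ∈ A, ∀ r ∈ A, p ≠ q → p ≠ r → q ≠ r →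
      crossProd p q r ≠ 0 := by
    intro p hp q hq r hr h1 h2 h3
    exact cross_ne_zero hC (hAC p hp) (hAC q hq) (hAC r hr) h1 h2 h3
  have H1 : ∀ p ∈ A, ∀ a ∈ A, ∀ b ∈ A, ∀ c ∈ A,
      p ≠ a → p ≠ b → p ≠ c → a ≠ b → a ≠ c → b ≠ c →
      0 < crossProd p a b → 0 < crossProd p b c → 0 < crossProd p a c →
      0 < crossProd a b c := by
    intro p hp a ha b hb c hc h1 h2 h3 h4 h5 h6
    exact ok_of_convexPos hC (hAC p hp) (hAC a ha) (hAC b hb) (hAC c hc)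
      h1 h2 h3 h4 h5 h6
  obtain ⟨l, hlnd, hlmem, hlcvx⟩ := core A H0 H1
  obtain ⟨la, lb, hnd, hcvx, hmema, hmemb⟩ := split_convex A₁ A₂ hd fa fb fc
    hsepA hsepB l hlnd (fun x => by rw [hlmem]) hlcvx
  have hnda : la.Nodup := hnd.of_append_left
  have hndb : lb.Nodup := hnd.of_append_right
  have hlena : la.length = 2 * n ^ 2 := by
    rw [← hc₁, ← List.toFinset_card_of_nodup hnda]
    congr 1
    ext z
    rw [List.mem_toFinset, hmema]
  have hlenb : lb.length = 2 * n ^ 2 := by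
    rw [← hc₂, ← List.toFinset_card_of_nodup hndb]
    congr 1
    ext z
    rw [List.mem_toFinset, hmemb]
  have hmemaC : ∀ x ∈ la, x ∈ C := fun x hx => h₁ ((hmema x).1 hx)
  have hmembC : ∀ x ∈ lb, x ∈ C := fun x hx => h₂ ((hmemb x).1 hx)
  have hmemC : ∀ x ∈ la ++ lb, x ∈ C := by
    intro x hx
    rcases List.mem_append.1 hx with h | h
    · exact hmemaC x h
    · exact hmembC x h
  -- apply ES to each side
  rcases es_lemma n la.length hn (le_of_eq hlena.symm)
      (fun i j => χ (la.get i) (la.get j)) c₀ with ⟨sa, hsa, hpa⟩ | ⟨sa, hsa, hca⟩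
  · rcases es_lemma n lb.length hn (le_of_eq hlenb.symm)
        (fun i j => χ (lb.get i) (lb.get j)) c₀ with ⟨sb, hsb, hpb⟩ | ⟨sb, hsb, hcb⟩
    · -- both paths : construction A on L = la ++ lb
      set L := la ++ lb with hL
      have hLlen : L.length = la.length + lb.length := by
        rw [hL, List.length_append]
      have hsav : ∀ a b : Fin n, (a:ℕ) < (b:ℕ) → (sa a).1 < (sa b).1 :=
        fun a b h => hsa (Fin.mk_lt_mk.2 (by omega) :
          (⟨a.1, a.2⟩ : Fin n) < ⟨b.1, b.2⟩)
      have hsbv : ∀ a b : Fin n, (a:ℕ) < (b:ℕ) → (sb a).1 < (sb b).1 :=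
        fun a b h => hsb (Fin.mk_lt_mk.2 (by omega) :
          (⟨a.1, a.2⟩ : Fin n) < ⟨b.1, b.2⟩)
      set σ : Fin n → Fin L.length :=
        fun i => ⟨(sa i).1, by have := (sa i).2; omega⟩ with hσdef
      set τ : Fin n → Fin L.length :=
        fun i => ⟨la.length + (sb ⟨n-1-(i:ℕ), by omega⟩).1, by
          have := (sb ⟨n-1-(i:ℕ), by omega⟩).2; omega⟩ with hτdef
      have hgetσ : ∀ i : Fin n, L.get (σ i) = la.get (sa i) := by
        intro i
        exact get_app_left la lb _ (sa i).2 _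
      have hgetτ : ∀ i : Fin n, L.get (τ i) = lb.get (sb ⟨n-1-(i:ℕ), by omega⟩) := by
        intro i
        exact get_app_right la lb _ (sb _).2 _
      refine master n C χ c₀ L hcvx hnd hmemC σ τ ?_ ?_ ?_ ?_
      · intro i j hij
        exact hsav i j hij
      · intro i j hij
        simp only [hτdef]
        have h1 : (⟨n-1-(j:ℕ), by omega⟩ : Fin n).1 < (⟨n-1-(i:ℕ), by omega⟩ : Fin n).1 := by
          simp only []
          have := i.2
          have := j.2
          omega
        have := hsbv _ _ h1
        omega
      · intro i j
        simp only [hσdef, hτdef]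
        have := (sa i).2
        omega
      · intro e he
        rcases he with ⟨i, j, hij, rfl⟩ | ⟨i, j, hij, rfl⟩ | ⟨i, rfl⟩
        · simp only [hgetσ]
          have hj2 := j.2
          have h' := hpa (i:ℕ) (by omega)
          have hi : (⟨(i:ℕ), by omega⟩ : Fin n) = i := Fin.ext rfl
          have hj : (⟨(i:ℕ)+1, by omega⟩ : Fin n) = j := Fin.ext (by simpa using hij)
          rwa [hi, hj] at h'
        · simp only [hgetτ]
          rw [hsym]
          have hi2 := i.2
          have hj2 := j.2
          have h' := hpb (n-1-(j:ℕ)) (by omega)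
          have hj : (⟨n-1-(j:ℕ)+1, by omega⟩ : Fin n) = ⟨n-1-(i:ℕ), by omega⟩ :=
            Fin.ext (by simp only [Fin.val_mk]; omega)
          rwa [hj] at h'
        · simp only [hgetσ, hgetτ]
          refine hmono _ ?_ _ ?_
          · exact (hmema _).1 (la.get_mem _)
          · exact (hmemb _).1 (lb.get_mem _)
    · -- clique in lb
      refine clique_case n hn C χ hsym (!c₀) lb
        (hcvx.sublist (List.sublist_append_right la lb)) hndb hmembC sb hsb hcb
  · -- clique in la
    refine clique_case n hn C χ hsym (!c₀) la
      (hcvx.sublist (List.sublist_append_left la lb)) hnda hmemaC sa hsa hca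


end
end
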